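/- arXiv:math/0503602 — 6 statements merged into one kernel-verified Lean document; each statement's English description precedes it below -/
import Mathlib

section
/- The K-transform characterizes a probability measure on the unit circle completely: if μ and ν are probability measures on S¹ with K_μ(z) = K_ν(z) for all z in the open unit disc 𝔻, then μ = ν. -/
/-!
Near `0` both `1 + ψ_μ` and `1 + ψ_ν` are close to `1`, so `K_μ = K_ν` forces `ψ_μ = ψ_ν` there,
`w ↦ w / (1 + w)` being injective away from `-1`. Expanding `1 / (1 - z x)` geometrically,
`1 + ψ_μ(z) = ∑ₙ (∫ xⁿ dμ) zⁿ`, so `μ` and `ν` have the same moments, and by conjugation the same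
integrals of `xⁿ` for all `n ∈ ℤ`. These functions span the star subalgebra generated by the
coordinate `x ↦ x`, which separates points, and a finite measure on a Polish space is determined
by its integrals against such a subalgebra.
-/

open MeasureTheory Metric

noncomputable instance : MeasurableSpace Circle := borel Circle
instance : BorelSpace Circle := ⟨rfl⟩

/-- `ψ_μ(z) = ∫_{S¹} zx/(1-zx) dμ(x)` for a measure `μ` on the unit circle. -/
noncomputable def psiM (μ : Measure Circle) (z : ℂ) : ℂ :=
  ∫ x : Circle, (z * x) / (1 - z * x) ∂μ

/-- The K-transform `K_μ(z) = ψ_μ(z)/(1 + ψ_μ(z))` of a measure on the unit circle. -/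
noncomputable def Km (μ : Measure Circle) (z : ℂ) : ℂ :=
  psiM μ z / (1 + psiM μ z)

open FormalMultilinearSeries
open scoped ComplexConjugate Topology BoundedContinuousFunction

theorem Continuous.integrable_of_compactSpace {X E : Type*} [TopologicalSpace X] [CompactSpace X]
    [MeasurableSpace X] [OpensMeasurableSpace X] [NormedAddCommGroup E] {μ : Measure X}
    [IsFiniteMeasure μ] {f : X → E} (hf : Continuous f) : Integrable f μ :=
  hf.integrable_of_hasCompactSupport (.of_compactSpace f)

theorem hasFPowerSeriesOnBall_ofScalars_of_norm_le_one {f : ℂ → ℂ} {c : ℕ → ℂ}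
    (hc : ∀ n, ‖c n‖ ≤ 1) (hf : ∀ z : ℂ, ‖z‖ < 1 → HasSum (fun n ↦ c n * z ^ n) (f z)) :
    HasFPowerSeriesOnBall f (ofScalars ℂ c) 0 1 where
  r_le := by
    simpa using (ofScalars ℂ c).le_radius_of_bound 1 (r := 1) fun n ↦ by simpa using hc n
  r_pos := one_pos
  hasSum {z} hz := by
    have hz : ‖z‖ < 1 := by simpa [enorm_eq_nnnorm, ← NNReal.coe_lt_coe] using hz
    simpa [ofScalars_apply_eq, mul_comm] using hf z hz

theorem eq_of_div_one_add_eq_div_one_add {K : Type*} [Field K] {p q : K} (hp : 1 + p ≠ 0)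
    (hq : 1 + q ≠ 0) (h : p / (1 + p) = q / (1 + q)) : p = q := by
  rw [div_eq_div_iff hp hq] at h
  linear_combination h

namespace Circle

theorem continuous_coe : Continuous ((↑) : Circle → ℂ) := continuous_subtype_val

theorem one_sub_mul_ne_zero {z : ℂ} (hz : ‖z‖ < 1) (x : Circle) : 1 - z * x ≠ 0 := by
  refine sub_ne_zero.2 fun h ↦ ?_
  have := congrArg norm h
  simp [norm_coe] at this
  linarith

theorem hasSum_integral_inv_one_sub_mul (μ : Measure Circle) [IsFiniteMeasure μ] {z : ℂ}
    (hz : ‖z‖ < 1) :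
    HasSum (fun n ↦ (∫ x, (x : ℂ) ^ n ∂μ) * z ^ n) (∫ x, (1 - z * x)⁻¹ ∂μ) := by
  have hgeom (x : Circle) : ∑' n, (z * x) ^ n = (1 - z * x)⁻¹ :=
    tsum_geometric_of_norm_lt_one (by simpa [norm_coe] using hz)
  simp_rw [← hgeom, ← integral_mul_const, mul_comm _ (z ^ _), ← mul_pow]
  refine hasSum_integral_of_summable_integral_norm
    (fun n ↦ Continuous.integrable_of_compactSpace (X := Circle)
      ((continuous_const.mul continuous_coe).pow n)) ?_
  simpa [norm_coe] using (summable_geometric_of_lt_one (norm_nonneg z) hz).mul_left (μ.real .univ)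

theorem one_add_psiM_eq_integral (μ : Measure Circle) [IsProbabilityMeasure μ] {z : ℂ}
    (hz : ‖z‖ < 1) : 1 + psiM μ z = ∫ x, (1 - z * x)⁻¹ ∂μ := by
  have hcont : Continuous fun x : Circle ↦ z * x / (1 - z * x) :=
    (continuous_const.mul continuous_coe).div (continuous_const.sub
      (continuous_const.mul continuous_coe)) (one_sub_mul_ne_zero hz)
  have hsplit (x : Circle) : (1 - z * x)⁻¹ = 1 + z * x / (1 - z * x) := by
    field_simp [one_sub_mul_ne_zero hz x]
    ring
  simp_rw [hsplit]
  rw [integral_add (integrable_const 1) hcont.integrable_of_compactSpace]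
  simp [psiM]

theorem norm_integral_pow_le_one (μ : Measure Circle) [IsProbabilityMeasure μ] (n : ℕ) :
    ‖∫ x, (x : ℂ) ^ n ∂μ‖ ≤ 1 := by
  simpa using norm_integral_le_of_norm_le_const (μ := μ) (C := 1)
    (f := fun x : Circle ↦ (x : ℂ) ^ n) (by simp [norm_coe])

theorem hasFPowerSeriesOnBall_one_add_psiM (μ : Measure Circle) [IsProbabilityMeasure μ] :
    HasFPowerSeriesOnBall (fun z ↦ 1 + psiM μ z) (ofScalars ℂ fun n ↦ ∫ x, (x : ℂ) ^ n ∂μ) 0 1 :=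
  hasFPowerSeriesOnBall_ofScalars_of_norm_le_one (norm_integral_pow_le_one μ) fun z hz ↦ by
    rw [one_add_psiM_eq_integral μ hz]
    exact hasSum_integral_inv_one_sub_mul μ hz

theorem integral_pow_eq_of_Km_eq {μ ν : Measure Circle} [IsProbabilityMeasure μ]
    [IsProbabilityMeasure ν] (h : ∀ z ∈ ball (0 : ℂ) 1, Km μ z = Km ν z) (n : ℕ) :
    ∫ x, (x : ℂ) ^ n ∂μ = ∫ x, (x : ℂ) ^ n ∂ν := by
  have hμ := (hasFPowerSeriesOnBall_one_add_psiM μ).hasFPowerSeriesAt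
  have hν := (hasFPowerSeriesOnBall_one_add_psiM ν).hasFPowerSeriesAt
  have hψ₀ (ρ : Measure Circle) : 1 + psiM ρ 0 ≠ 0 := by simp [psiM]
  have heq : (fun z ↦ 1 + psiM μ z) =ᶠ[𝓝 0] fun z ↦ 1 + psiM ν z := by
    filter_upwards [hμ.continuousAt.eventually_ne (hψ₀ μ), hν.continuousAt.eventually_ne (hψ₀ ν),
      ball_mem_nhds 0 one_pos] with z hμz hνz hz
    rw [eq_of_div_one_add_eq_div_one_add hμz hνz (h z hz)]
  exact congrFun ((ofScalars_series_eq_iff ℂ _ _).1 ((hμ.congr heq).eq_formalMultilinearSeries hν)) n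

theorem integral_zpow_eq_of_integral_pow_eq {μ ν : Measure Circle}
    (h : ∀ n : ℕ, ∫ x, (x : ℂ) ^ n ∂μ = ∫ x, (x : ℂ) ^ n ∂ν) (n : ℤ) :
    ∫ x, (x : ℂ) ^ n ∂μ = ∫ x, (x : ℂ) ^ n ∂ν := by
  obtain ⟨n, rfl | rfl⟩ := n.eq_nat_or_neg
  · simpa using h n
  · have hconj (x : Circle) : (x : ℂ) ^ (-n : ℤ) = conj ((x : ℂ) ^ n) := by
      rw [zpow_neg, zpow_natCast, Complex.inv_eq_conj (by simp [norm_coe])]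
    simp_rw [hconj, integral_conj, h n]

noncomputable def coeBCF : Circle →ᵇ ℂ := .mkOfCompact ⟨(↑), continuous_coe⟩

@[simp] theorem coeBCF_apply (x : Circle) : coeBCF x = x := rfl

theorem exists_eq_zpow_of_mem_closure {g : Circle →ᵇ ℂ}
    (hg : g ∈ Submonoid.closure ({coeBCF} ∪ star {coeBCF})) :
    ∃ n : ℤ, ∀ x, g x = (x : ℂ) ^ n := by
  induction hg using Submonoid.closure_induction with
  | mem g hg =>
    rcases hg with rfl | hg
    · exact ⟨1, fun x ↦ by simp⟩
    · rw [Set.star_singleton, Set.mem_singleton_iff] at hg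
      subst hg
      exact ⟨-1, fun x ↦ by simp [Complex.inv_eq_conj (norm_coe x)]⟩
  | one => exact ⟨0, fun x ↦ by simp⟩
  | mul f g _ _ hf hg =>
    obtain ⟨m, hm⟩ := hf
    obtain ⟨n, hn⟩ := hg
    exact ⟨m + n, fun x ↦ by simp [hm, hn, zpow_add₀ (coe_ne_zero x)]⟩

theorem ext_of_integral_zpow_eq {μ ν : Measure Circle} [IsFiniteMeasure μ] [IsFiniteMeasure ν]
    (h : ∀ n : ℤ, ∫ x, (x : ℂ) ^ n ∂μ = ∫ x, (x : ℂ) ^ n ∂ν) : μ = ν := by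
  refine ext_of_forall_mem_subalgebra_integral_eq_of_polish
    (A := StarAlgebra.adjoin ℂ {coeBCF}) ?_ fun g hg ↦ ?_
  · intro x y hxy
    exact ⟨_, ⟨_, ⟨coeBCF, StarAlgebra.self_mem_adjoin_singleton ℂ coeBCF, rfl⟩, rfl⟩,
      fun e ↦ hxy (coe_injective e)⟩
  · replace hg : g ∈ Submodule.span ℂ (Submonoid.closure ({coeBCF} ∪ star {coeBCF}) : Set _) := by
      rw [← StarAlgebra.adjoin_eq_span]
      exact hg
    induction hg using Submodule.span_induction with
    | mem g hg =>
      obtain ⟨n, hn⟩ := exists_eq_zpow_of_mem_closure hg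
      simp_rw [hn]
      exact h n
    | zero => simp
    | add f g _ _ hf hg =>
      simp only [BoundedContinuousFunction.coe_add, Pi.add_apply]
      rw [integral_add (f.integrable μ) (g.integrable μ), integral_add (f.integrable ν)
        (g.integrable ν), hf, hg]
    | smul c g _ hg =>
      simp only [BoundedContinuousFunction.coe_smul, integral_smul, hg]

end Circle

/-- The K-transform characterizes a probability measure on the unit circle completely. -/
theorem Ktransform_injective (μ ν : Measure Circle)
    (hμ : IsProbabilityMeasure μ) (hν : IsProbabilityMeasure ν)
    (h : ∀ z ∈ ball (0 : ℂ) 1, Km μ z = Km ν z) :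
    μ = ν :=
  Circle.ext_of_integral_zpow_eq
    (Circle.integral_zpow_eq_of_integral_pow_eq (Circle.integral_pow_eq_of_Km_eq h))
end

section
/- The monotone convolution is affine in its first argument: for probability measures μ₁, μ₂, ν on the unit circle S¹ and t ∈ [0,1], one has (t·μ₁ + (1−t)·μ₂) ▷ ν = t·(μ₁ ▷ ν) + (1−t)·(μ₂ ▷ ν). -/
open MeasureTheory Metric

/-!
`Re ψ_μ > -1/2` on the disc, so `K_μ` maps the disc into itself and `ψ_μ = K_μ / (1 - K_μ)` is
recovered from `K_μ`. As `ψ_μ` is affine in `μ`, the hypotheses give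
`ψ_ρ(z) = ψ_{tμ₁+(1-t)μ₂}(K_ν z) = t ψ_{ρ₁}(z) + (1-t) ψ_{ρ₂}(z) = ψ_{tρ₁+(1-t)ρ₂}(z)`.
Finally `1 + ψ_μ(z) = ∑ₙ (∫ xⁿ dμ) zⁿ`, so `ψ_μ` determines the moments of `μ`; together with
`∫ x⁻ⁿ dμ = conj ∫ xⁿ dμ` these are the integrals of all Laurent polynomials, which are dense in
`C(S¹, ℂ)`, so they determine `μ`.
-/

open scoped BoundedContinuousFunction

lemma isProbabilityMeasure_smul_add_one_sub_smul {α : Type*} [MeasurableSpace α]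
    {μ ν : Measure α} [IsProbabilityMeasure μ] [IsProbabilityMeasure ν] {t : ENNReal}
    (ht : t ≤ 1) : IsProbabilityMeasure (t • μ + (1 - t) • ν) where
  measure_univ := by simp [add_tsub_cancel_of_le ht]

lemma eq_of_div_one_add_eq_div_one_add_s7 {K : Type*} [Field K] {a b : K} (ha : 1 + a ≠ 0)
    (hb : 1 + b ≠ 0) (h : a / (1 + a) = b / (1 + b)) : a = b := by
  field_simp at h
  linear_combination h

lemma Complex.norm_lt_norm_one_add {a : ℂ} (ha : -(1 / 2) < a.re) : ‖a‖ < ‖1 + a‖ := by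
  rw [← sq_lt_sq₀ (norm_nonneg _) (norm_nonneg _), ← Complex.normSq_eq_norm_sq,
    ← Complex.normSq_eq_norm_sq, Complex.normSq_apply, Complex.normSq_apply]
  simp only [Complex.add_re, Complex.add_im, Complex.one_re, Complex.one_im]
  linarith

lemma Complex.neg_half_lt_re_div_one_sub {w : ℂ} (hw : ‖w‖ < 1) : -(1 / 2) < (w / (1 - w)).re := by
  have hne : 1 - w ≠ 0 := sub_ne_zero.mpr fun h => by simp [← h] at hw
  have hpos : 0 < Complex.normSq (1 - w) := Complex.normSq_pos.mpr hne
  have hw2 : w.re * w.re + w.im * w.im < 1 := by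
    rw [← Complex.normSq_apply, Complex.normSq_eq_norm_sq]
    nlinarith [norm_nonneg w]
  rw [Complex.div_re, ← add_div, neg_lt, ← neg_div, div_lt_iff₀ hpos]
  simp only [Complex.normSq_apply, Complex.sub_re, Complex.sub_im, Complex.one_re,
    Complex.one_im]
  nlinarith

lemma norm_mul_circle (z : ℂ) (x : Circle) : ‖z * x‖ = ‖z‖ := by simp [Circle.norm_coe]

lemma one_sub_mul_circle_ne_zero {z : ℂ} (hz : ‖z‖ < 1) (x : Circle) : 1 - z * x ≠ 0 := by
  refine sub_ne_zero.mpr fun h => ?_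
  have := norm_mul_circle z x
  rw [← h, norm_one] at this
  linarith

lemma continuous_psiM_integrand {z : ℂ} (hz : ‖z‖ < 1) :
    Continuous fun x : Circle => z * x / (1 - z * x) :=
  (by fun_prop : Continuous fun x : Circle => z * x).div (by fun_prop)
    (one_sub_mul_circle_ne_zero hz)

lemma integrable_psiM_integrand (μ : Measure Circle) [IsFiniteMeasure μ] {z : ℂ} (hz : ‖z‖ < 1) :
    Integrable (fun x : Circle => z * x / (1 - z * x)) μ :=
  (continuous_psiM_integrand hz).integrable_of_hasCompactSupport (.of_compactSpace _)

lemma psiM_smul_add_smul (μ₁ μ₂ : Measure Circle) [IsFiniteMeasure μ₁] [IsFiniteMeasure μ₂]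
    {s r : ENNReal} (hs : s ≠ ⊤) (hr : r ≠ ⊤) {z : ℂ} (hz : ‖z‖ < 1) :
    psiM (s • μ₁ + r • μ₂) z = s.toReal * psiM μ₁ z + r.toReal * psiM μ₂ z := by
  rw [psiM, integral_add_measure ((integrable_psiM_integrand μ₁ hz).smul_measure hs)
    ((integrable_psiM_integrand μ₂ hz).smul_measure hr), integral_smul_measure,
    integral_smul_measure, psiM, psiM, Complex.real_smul, Complex.real_smul]

-- Compactness of the circle makes the pointwise bound on the integrand uniform.
lemma neg_half_lt_re_psiM (μ : Measure Circle) [IsProbabilityMeasure μ] {z : ℂ} (hz : ‖z‖ < 1) :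
    -(1 / 2) < (psiM μ z).re := by
  have hcont : Continuous fun x : Circle => (z * x / (1 - z * x)).re :=
    Complex.continuous_re.comp (continuous_psiM_integrand hz)
  obtain ⟨x₀, -, hmin⟩ := isCompact_univ.exists_isMinOn Set.univ_nonempty hcont.continuousOn
  calc -(1 / 2) < (z * x₀ / (1 - z * x₀)).re :=
        Complex.neg_half_lt_re_div_one_sub (by rwa [norm_mul_circle])
    _ = ∫ _ : Circle, (z * x₀ / (1 - z * x₀)).re ∂μ := by simp
    _ ≤ ∫ x : Circle, (z * x / (1 - z * x)).re ∂μ :=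
        integral_mono (integrable_const _) (integrable_psiM_integrand μ hz).re
          fun x => hmin (Set.mem_univ x)
    _ = (psiM μ z).re := integral_re (integrable_psiM_integrand μ hz)

lemma one_add_psiM_ne_zero (μ : Measure Circle) [IsProbabilityMeasure μ] {z : ℂ}
    (hz : ‖z‖ < 1) : 1 + psiM μ z ≠ 0 := by
  intro h
  have := congrArg Complex.re h
  simp only [Complex.add_re, Complex.one_re, Complex.zero_re] at this
  linarith [neg_half_lt_re_psiM μ hz]

lemma norm_Km_lt_one (μ : Measure Circle) [IsProbabilityMeasure μ] {z : ℂ} (hz : ‖z‖ < 1) :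
    ‖Km μ z‖ < 1 := by
  rw [Km, norm_div, div_lt_one (norm_pos_iff.mpr (one_add_psiM_ne_zero μ hz))]
  exact Complex.norm_lt_norm_one_add (neg_half_lt_re_psiM μ hz)

lemma psiM_eq_of_Km_eq {μ μ' : Measure Circle} [IsProbabilityMeasure μ] [IsProbabilityMeasure μ']
    {z w : ℂ} (hz : ‖z‖ < 1) (hw : ‖w‖ < 1) (h : Km μ z = Km μ' w) : psiM μ z = psiM μ' w :=
  eq_of_div_one_add_eq_div_one_add_s7 (one_add_psiM_ne_zero μ hz) (one_add_psiM_ne_zero μ' hw) h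

namespace Circle

noncomputable def zpowChar (n : ℤ) : Circle →ᵇ ℂ :=
  .mkOfCompact ⟨fun x => ((x ^ n : Circle) : ℂ), continuous_subtype_val.comp (continuous_zpow n)⟩

@[simp]
lemma zpowChar_apply (n : ℤ) (x : Circle) : zpowChar n x = ((x ^ n : Circle) : ℂ) := rfl

lemma zpowChar_zero : zpowChar 0 = 1 := by ext x; simp

lemma zpowChar_add (m n : ℤ) : zpowChar (m + n) = zpowChar m * zpowChar n := by
  ext x; simp [zpow_add]

lemma star_zpowChar (n : ℤ) : star (zpowChar n) = zpowChar (-n) := by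
  ext x
  simp [← Circle.coe_inv_eq_conj]

lemma mem_span_zpowChar_of_mem_adjoin {g : Circle →ᵇ ℂ}
    (hg : g ∈ StarAlgebra.adjoin ℂ {zpowChar 1}) :
    g ∈ Submodule.span ℂ (Set.range zpowChar) := by
  rw [← StarSubalgebra.mem_toSubalgebra, ← Subalgebra.mem_toSubmodule,
    StarAlgebra.adjoin_eq_span] at hg
  refine Submodule.span_mono (fun g hg => ?_) hg
  induction hg using Submonoid.closure_induction with
  | mem g hg =>
    rw [Set.star_singleton] at hg
    rcases hg with rfl | rfl
    · exact ⟨1, rfl⟩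
    · exact ⟨-1, by simp [star_zpowChar]⟩
  | one => exact ⟨0, zpowChar_zero⟩
  | mul f g _ _ hf hg =>
    obtain ⟨m, rfl⟩ := hf
    obtain ⟨n, rfl⟩ := hg
    exact ⟨m + n, zpowChar_add m n⟩

noncomputable def moment (μ : Measure Circle) (n : ℤ) : ℂ := ∫ x, ((x ^ n : Circle) : ℂ) ∂μ

lemma moment_natCast (μ : Measure Circle) (n : ℕ) :
    moment μ n = ∫ x : Circle, (x : ℂ) ^ n ∂μ := by
  simp [moment]

lemma moment_neg (μ : Measure Circle) (n : ℤ) : moment μ (-n) = starRingEnd ℂ (moment μ n) := by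
  simp only [moment, zpow_neg, Circle.coe_inv_eq_conj]
  exact integral_conj

lemma norm_moment_le (μ : Measure Circle) [IsProbabilityMeasure μ] (n : ℤ) :
    ‖moment μ n‖ ≤ 1 := by
  simpa [moment] using norm_integral_le_of_norm_le_const (μ := μ)
    (f := fun x : Circle => ((x ^ n : Circle) : ℂ)) (C := 1) (by simp [Circle.norm_coe])

theorem measure_ext_of_moment_eq {P P' : Measure Circle} [IsFiniteMeasure P]
    [IsFiniteMeasure P'] (h : ∀ n, moment P n = moment P' n) : P = P' := by
  refine ext_of_forall_mem_subalgebra_integral_eq_of_polish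
    (A := StarAlgebra.adjoin ℂ {zpowChar 1}) ?_ fun g hg => ?_
  · intro x y hxy
    refine ⟨_, ⟨_, ⟨zpowChar 1, StarAlgebra.subset_adjoin ℂ _ (Set.mem_singleton _), rfl⟩, rfl⟩, ?_⟩
    simpa using Circle.coe_injective.ne hxy
  · have hspan := mem_span_zpowChar_of_mem_adjoin hg
    clear hg
    induction hspan using Submodule.span_induction with
    | mem g hg =>
      obtain ⟨n, rfl⟩ := hg
      exact h n
    | zero => simp
    | add f g _ _ hf hg =>
      simp only [BoundedContinuousFunction.coe_add, Pi.add_apply]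
      rw [integral_add (f.integrable P) (g.integrable P),
        integral_add (f.integrable P') (g.integrable P'), hf, hg]
    | smul c g _ hg =>
      simp only [BoundedContinuousFunction.coe_smul, smul_eq_mul]
      rw [integral_const_mul, integral_const_mul, hg]

end Circle

lemma hasSum_moment_mul_pow (μ : Measure Circle) [IsProbabilityMeasure μ] {z : ℂ}
    (hz : ‖z‖ < 1) : HasSum (fun n : ℕ => Circle.moment μ n * z ^ n) (1 + psiM μ z) := by
  have hgeom (x : Circle) : HasSum (fun n : ℕ => (z * x) ^ n) (1 + z * x / (1 - z * x)) := by
    rw [one_add_div (one_sub_mul_circle_ne_zero hz x), sub_add_cancel, one_div]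
    exact hasSum_geometric_of_norm_lt_one (by rwa [norm_mul_circle])
  have hsum := hasSum_integral_of_summable_integral_norm (μ := μ)
    (F := fun (n : ℕ) (x : Circle) => (z * x) ^ n)
    (fun n => (by fun_prop : Continuous fun x : Circle => (z * x) ^ n)
      |>.integrable_of_hasCompactSupport (.of_compactSpace _))
    (by simpa [norm_pow, Circle.norm_coe] using summable_geometric_of_lt_one (norm_nonneg z) hz)
  simp_rw [fun x => (hgeom x).tsum_eq] at hsum
  rw [integral_add (integrable_const 1) (integrable_psiM_integrand μ hz)] at hsum
  simpa [mul_pow, integral_const_mul, Circle.moment_natCast, mul_comm, psiM] using hsum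

lemma hasFPowerSeriesOnBall_one_add_psiM (μ : Measure Circle) [IsProbabilityMeasure μ] :
    HasFPowerSeriesOnBall (fun z => 1 + psiM μ z)
      (.ofScalars ℂ fun n : ℕ => Circle.moment μ n) 0 1 where
  r_le := by
    refine ENNReal.le_of_forall_nnreal_lt fun r hr => ?_
    refine FormalMultilinearSeries.le_radius_of_bound _ 1 fun n => ?_
    rw [FormalMultilinearSeries.ofScalars_norm]
    have hr1 : (r : ℝ) ≤ 1 := by exact_mod_cast hr.le
    exact mul_le_one₀ (Circle.norm_moment_le μ n) (pow_nonneg r.2 n) (pow_le_one₀ r.2 hr1)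
  r_pos := one_pos
  hasSum {y} hy := by
    simpa [FormalMultilinearSeries.ofScalars_apply_eq, mul_comm] using
      hasSum_moment_mul_pow μ (by simpa [← ofReal_norm] using hy)

lemma moment_eq_of_psiM_eq {ρ σ : Measure Circle} [IsProbabilityMeasure ρ]
    [IsProbabilityMeasure σ] (h : ∀ z ∈ ball (0 : ℂ) 1, psiM ρ z = psiM σ z) (n : ℤ) :
    Circle.moment ρ n = Circle.moment σ n := by
  have heq : (fun z => 1 + psiM ρ z) =ᶠ[nhds 0] fun z => 1 + psiM σ z := by
    filter_upwards [ball_mem_nhds (0 : ℂ) one_pos] with z hz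
    rw [h z hz]
  have hcoeff := FormalMultilinearSeries.ofScalars_series_injective ℂ ℂ <|
    (hasFPowerSeriesOnBall_one_add_psiM ρ).hasFPowerSeriesAt
      |>.eq_formalMultilinearSeries_of_eventually
        (hasFPowerSeriesOnBall_one_add_psiM σ).hasFPowerSeriesAt heq
  obtain ⟨n, rfl | rfl⟩ := n.eq_nat_or_neg
  · exact congrFun hcoeff n
  · rw [Circle.moment_neg, Circle.moment_neg, congrFun hcoeff n]

/-- The monotone convolution is affine in its first argument:
`(t μ₁ + (1-t) μ₂) ▷ ν = t (μ₁ ▷ ν) + (1-t) (μ₂ ▷ ν)`, where `▷` is characterized by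
`K_{μ ▷ ν} = K_μ ∘ K_ν` on the open unit disc. -/
theorem monotone_convolution_affine (μ₁ μ₂ ν : Measure Circle)
    (hμ₁ : IsProbabilityMeasure μ₁) (hμ₂ : IsProbabilityMeasure μ₂)
    (hν : IsProbabilityMeasure ν)
    (t : ENNReal) (ht : t ≤ 1)
    (ρ₁ ρ₂ ρ : Measure Circle)
    (hρ₁ : IsProbabilityMeasure ρ₁) (hρ₂ : IsProbabilityMeasure ρ₂)
    (hρ : IsProbabilityMeasure ρ)
    (hKρ₁ : ∀ z ∈ ball (0 : ℂ) 1, Km ρ₁ z = Km μ₁ (Km ν z))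
    (hKρ₂ : ∀ z ∈ ball (0 : ℂ) 1, Km ρ₂ z = Km μ₂ (Km ν z))
    (hKρ : ∀ z ∈ ball (0 : ℂ) 1, Km ρ z = Km (t • μ₁ + (1 - t) • μ₂) (Km ν z)) :
    ρ = t • ρ₁ + (1 - t) • ρ₂ := by
  have ht_ne_top : t ≠ ⊤ := ne_top_of_le_ne_top ENNReal.one_ne_top ht
  have h1t_ne_top : 1 - t ≠ ⊤ := ENNReal.sub_ne_top ENNReal.one_ne_top
  have := isProbabilityMeasure_smul_add_one_sub_smul (μ := μ₁) (ν := μ₂) ht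
  have := isProbabilityMeasure_smul_add_one_sub_smul (μ := ρ₁) (ν := ρ₂) ht
  refine Circle.measure_ext_of_moment_eq (moment_eq_of_psiM_eq fun z hz => ?_)
  have hz' : ‖z‖ < 1 := mem_ball_zero_iff.mp hz
  have hw := norm_Km_lt_one ν hz'
  rw [psiM_eq_of_Km_eq hz' hw (hKρ z hz), psiM_smul_add_smul _ _ ht_ne_top h1t_ne_top hw,
    psiM_smul_add_smul _ _ ht_ne_top h1t_ne_top hz', psiM_eq_of_Km_eq hz' hw (hKρ₁ z hz),
    psiM_eq_of_Km_eq hz' hw (hKρ₂ z hz)]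
end

section
/- Let (K_t)_{t≥0} be a continuous composition semigroup of K-transforms. Then there exists a holomorphic function u : 𝔻 → ℂ with Re u(z) ≥ 0 for all z ∈ 𝔻 such that for every z ∈ 𝔻 the map t ↦ K_t(z) is differentiable on [0,∞) and satisfies d/dt K_t(z) = −K_t(z)·u(K_t(z)) for all t ≥ 0, with K_0(z) = z. -/
/-!
Averaging the semigroup over a short time interval, `H x = ∫₀^{t₀} K_s x ds`, gives a holomorphic
map with `H' ≈ t₀ ≠ 0` near any given point, and `H (K_τ z) = ∫_τ^{τ+t₀} K_s z ds` is differentiable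
in `τ`. Inverting `H` locally shows that every orbit `τ ↦ K_τ z` is differentiable, with derivative
`G (K_τ z)` where `G w = (H' w)⁻¹ (K_{t₀} w - w)` is holomorphic. Since `G 0 = 0`, `G w = -w u(w)`
with `u` holomorphic, and `Re u ≥ 0` because, by Schwarz's lemma, `Re (w̄ K_s w) ≤ |w|²` is
maximal at `s = 0`.
-/

open Metric Set Filter Topology MeasureTheory intervalIntegral ComplexConjugate

theorem intervalIntegral_ne_zero_of_norm_sub_one_le {g : ℝ → ℂ} {a b c : ℝ} (hab : a < b)
    (hc : c < 1) (hg : IntervalIntegrable g volume a b) (hb : ∀ s ∈ Icc a b, ‖g s - 1‖ ≤ c) :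
    ∫ s in a..b, g s ≠ 0 := by
  intro h0
  have hsub : ∫ s in a..b, (g s - 1) = -((b - a : ℝ) : ℂ) := by
    rw [integral_sub hg intervalIntegrable_const, h0]
    simp
  have hle : ‖∫ s in a..b, (g s - 1)‖ ≤ c * |b - a| :=
    norm_integral_le_of_norm_le_const fun s hs => by
      rw [uIoc_of_le hab.le] at hs
      exact hb s (Ioc_subset_Icc_self hs)
  rw [hsub, norm_neg, Complex.norm_real, Real.norm_eq_abs, abs_of_pos (sub_pos.2 hab)] at hle
  nlinarith

/-- The derivatives are dominated through the Cauchy estimates. -/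
theorem hasDerivAt_intervalIntegral_of_norm_le {F : ℝ → ℂ → ℂ} {U : Set ℂ} {a b M : ℝ} {w : ℂ}
    (hU : IsOpen U) (hw : w ∈ U) (hdiff : ∀ s ∈ uIcc a b, DifferentiableOn ℂ (F s) U)
    (hbound : ∀ s ∈ uIcc a b, ∀ x ∈ U, ‖F s x‖ ≤ M)
    (hcont : ∀ x ∈ U, ContinuousOn (fun s => F s x) (uIcc a b))
    (hderiv : ContinuousOn (fun s => deriv (F s) w) (uIcc a b)) :
    HasDerivAt (fun x => ∫ s in a..b, F s x) (∫ s in a..b, deriv (F s) w) w := by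
  obtain ⟨ε, hε, hεU⟩ := Metric.isOpen_iff.1 hU w hw
  have hε2 : 0 < ε / 2 := half_pos hε
  have hsub : ∀ x ∈ ball w (ε / 2), ball x (ε / 2) ⊆ U := fun x hx =>
    (ball_subset_ball' (by rw [mem_ball] at hx; linarith)).trans hεU
  have hmem : ∀ x ∈ ball w (ε / 2), x ∈ U := fun x hx => hsub x hx (mem_ball_self hε2)
  have hmeas : ∀ {g : ℝ → ℂ}, ContinuousOn g (uIcc a b) →
      AEStronglyMeasurable g (volume.restrict (uIoc a b)) :=
    fun hg => (hg.mono uIoc_subset_uIcc).aestronglyMeasurable measurableSet_uIoc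
  refine (hasDerivAt_integral_of_dominated_loc_of_deriv_le (F := fun x s => F s x)
    (F' := fun x s => deriv (F s) x) (bound := fun _ => 2 * M / (ε / 2))
    (ball_mem_nhds w hε2) ?_ (hcont w hw).intervalIntegrable (hmeas hderiv) ?_
    intervalIntegrable_const ?_).2
  · filter_upwards [hU.mem_nhds hw] with x hx using hmeas (hcont x hx)
  · refine ae_of_all _ fun s hs x hx => Complex.norm_deriv_le_div_of_mapsTo_ball
      ((hdiff s (uIoc_subset_uIcc hs)).mono (hsub x hx)) (fun y hy => ?_) hε2
    have hy := hbound s (uIoc_subset_uIcc hs) y (hsub x hx hy)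
    have hx := hbound s (uIoc_subset_uIcc hs) x (hmem x hx)
    rw [mem_closedBall, dist_eq_norm]
    linarith [norm_sub_le (F s y) (F s x)]
  · exact ae_of_all _ fun s hs x hx =>
      ((hdiff s (uIoc_subset_uIcc hs)).differentiableAt (hU.mem_nhds (hmem x hx))).hasDerivAt

theorem hasDerivAt_integral_add_const {E : Type*} [NormedAddCommGroup E] [NormedSpace ℝ E]
    [CompleteSpace E] {f : ℝ → E} (hf : Continuous f) (c t : ℝ) :
    HasDerivAt (fun τ => ∫ s in τ..τ + c, f s) (f (t + c) - f t) t := by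
  have hF : ∀ x, HasDerivAt (fun τ => ∫ s in 0..τ, f s) (f x) x :=
    fun x => (hf.integral_hasStrictDerivAt 0 x).hasDerivAt
  refine (((hF (t + c)).comp_add_const t c).sub (hF t)).congr_of_eventuallyEq
    (Eventually.of_forall fun τ => ?_)
  exact (integral_interval_sub_left (hf.intervalIntegrable _ _) (hf.intervalIntegrable _ _)).symm

theorem HasStrictDerivAt.hasDerivWithinAt_of_comp {𝕜 𝕜' : Type*} [NontriviallyNormedField 𝕜]
    [NontriviallyNormedField 𝕜'] [CompleteSpace 𝕜'] [NormedAlgebra 𝕜 𝕜'] {H : 𝕜' → 𝕜'}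
    {D d : 𝕜'} {f : 𝕜 → 𝕜'} {s : Set 𝕜} {t : 𝕜} (hH : HasStrictDerivAt H D (f t)) (hD : D ≠ 0)
    (hf : ContinuousWithinAt f s t) (hHf : HasDerivWithinAt (fun τ => H (f τ)) d s t) :
    HasDerivWithinAt f (D⁻¹ * d) s t := by
  have hinv := hH.eventually_left_inverse hD
  refine ((hH.to_localInverse hD).hasDerivAt.comp_hasDerivWithinAt t hHf).congr_of_eventuallyEq
    ?_ hinv.self_of_nhds.symm
  filter_upwards [hf.eventually hinv] with τ hτ using hτ.symm

theorem re_neg_div_nonneg {w g : ℂ} (h : (conj w * g).re ≤ 0) : 0 ≤ (-(g / w)).re := by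
  rw [div_eq_mul_inv, Complex.inv_def, ← mul_assoc, mul_comm g, Complex.neg_re,
    Complex.re_mul_ofReal]
  exact neg_nonneg.2 (mul_nonpos_of_nonpos_of_nonneg h (inv_nonneg.2 (Complex.normSq_nonneg w)))

theorem re_neg_dslope_nonneg {G : ℂ → ℂ} {U : Set ℂ} {w : ℂ} (hU : IsOpen U)
    (hG : DifferentiableOn ℂ G U) (hG0 : G 0 = 0) (hre : ∀ x ∈ U, (conj x * G x).re ≤ 0)
    (hw : w ∈ U) : 0 ≤ (-dslope G 0 w).re := by
  have hne : ∀ x ∈ U, x ≠ 0 → 0 ≤ (-dslope G 0 x).re := fun x hx hx0 => by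
    rw [dslope_of_ne _ hx0, slope_def_field, hG0, sub_zero, sub_zero]
    exact re_neg_div_nonneg (hre x hx)
  rcases eq_or_ne w 0 with rfl | hw0
  · have hc : ContinuousAt (fun x => (-dslope G 0 x).re) 0 :=
      Complex.continuous_re.continuousAt.comp
        (continuousAt_dslope_same.2 (hG.differentiableAt (hU.mem_nhds hw))).neg
    refine ge_of_tendsto (hc.tendsto.mono_left (nhdsWithin_le_nhds (s := {(0 : ℂ)}ᶜ))) ?_
    filter_upwards [self_mem_nhdsWithin, mem_nhdsWithin_of_mem_nhds (hU.mem_nhds hw)]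
      with x hx0 hx using hne x hx hx0
  · exact hne w hw hw0

structure IsKTransformSemigroup (K : ℝ → ℂ → ℂ) : Prop where
  differentiableOn : ∀ t ≥ (0 : ℝ), DifferentiableOn ℂ (K t) (ball (0 : ℂ) 1)
  mapsTo : ∀ t ≥ (0 : ℝ), MapsTo (K t) (ball (0 : ℂ) 1) (ball (0 : ℂ) 1)
  apply_zero : ∀ t ≥ (0 : ℝ), K t 0 = 0
  zero_apply : ∀ z ∈ ball (0 : ℂ) 1, K 0 z = z
  add_apply : ∀ s ≥ (0 : ℝ), ∀ t ≥ (0 : ℝ), ∀ z ∈ ball (0 : ℂ) 1, K (s + t) z = K s (K t z)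
  tendstoLocallyUniformlyOn : ∀ t₀ ≥ (0 : ℝ),
    TendstoLocallyUniformlyOn K (K t₀) (𝓝[Ici 0] t₀) (ball (0 : ℂ) 1)

noncomputable def generator (K : ℝ → ℂ → ℂ) (w : ℂ) : ℂ :=
  derivWithin (fun s => K s w) (Ici 0) 0

namespace IsKTransformSemigroup

variable {K : ℝ → ℂ → ℂ} {z w : ℂ} {t t₀ : ℝ}

theorem continuousOn_apply (hK : IsKTransformSemigroup K) (hz : z ∈ ball (0 : ℂ) 1) :
    ContinuousOn (fun s => K s z) (Ici 0) :=
  fun t ht => (hK.tendstoLocallyUniformlyOn t ht).tendsto_at hz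

theorem tendstoLocallyUniformlyOn_deriv (hK : IsKTransformSemigroup K) (ht : 0 ≤ t) :
    TendstoLocallyUniformlyOn (fun s => deriv (K s)) (deriv (K t)) (𝓝[Ici 0] t)
      (ball (0 : ℂ) 1) :=
  (hK.tendstoLocallyUniformlyOn t ht).deriv
    (eventually_mem_nhdsWithin.mono fun s hs => hK.differentiableOn s hs) isOpen_ball

theorem continuousOn_deriv_apply (hK : IsKTransformSemigroup K) (hw : w ∈ ball (0 : ℂ) 1) :
    ContinuousOn (fun s => deriv (K s) w) (Ici 0) :=
  fun _ ht => (hK.tendstoLocallyUniformlyOn_deriv ht).tendsto_at hw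

theorem deriv_zero_apply (hK : IsKTransformSemigroup K) (hw : w ∈ ball (0 : ℂ) 1) :
    deriv (K 0) w = 1 := by
  have h : K 0 =ᶠ[𝓝 w] id := eventually_of_mem (isOpen_ball.mem_nhds hw) hK.zero_apply
  rw [h.deriv_eq, deriv_id]

theorem exists_norm_deriv_sub_one_le (hK : IsKTransformSemigroup K) (hz : z ∈ ball (0 : ℂ) 1) :
    ∃ t₀ > 0, ∀ᶠ x in 𝓝 z, ∀ s ∈ Icc 0 t₀, ‖deriv (K s) x - 1‖ ≤ 1 / 2 := by
  obtain ⟨V, hV, hev⟩ := Metric.tendstoLocallyUniformlyOn_iff.1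
    (hK.tendstoLocallyUniformlyOn_deriv le_rfl) (1 / 2) (by norm_num) z hz
  obtain ⟨t₀, ht₀, hsub⟩ := mem_nhdsGE_iff_exists_Icc_subset.1 hev
  refine ⟨t₀, ht₀, ?_⟩
  filter_upwards [isOpen_ball.nhdsWithin_eq hz ▸ hV, isOpen_ball.mem_nhds hz] with x hxV hx s hs
  have h := hsub hs x hxV
  rw [hK.deriv_zero_apply hx, dist_comm, dist_eq_norm] at h
  exact h.le

theorem integral_deriv_ne_zero (hK : IsKTransformSemigroup K) (hw : w ∈ ball (0 : ℂ) 1)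
    (ht₀ : 0 < t₀) (hb : ∀ s ∈ Icc 0 t₀, ‖deriv (K s) w - 1‖ ≤ 1 / 2) :
    ∫ s in 0..t₀, deriv (K s) w ≠ 0 :=
  intervalIntegral_ne_zero_of_norm_sub_one_le ht₀ (by norm_num)
    ((hK.continuousOn_deriv_apply hw).mono (uIcc_of_le ht₀.le ▸ Icc_subset_Ici_self)
      |>.intervalIntegrable) hb

theorem hasDerivAt_integral_apply (hK : IsKTransformSemigroup K) (ht₀ : 0 ≤ t₀)
    (hw : w ∈ ball (0 : ℂ) 1) :
    HasDerivAt (fun x => ∫ s in 0..t₀, K s x) (∫ s in 0..t₀, deriv (K s) w) w := by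
  have hI : uIcc 0 t₀ ⊆ Ici 0 := uIcc_of_le ht₀ ▸ Icc_subset_Ici_self
  exact hasDerivAt_intervalIntegral_of_norm_le isOpen_ball hw
    (fun s hs => hK.differentiableOn s (hI hs))
    (fun s hs x hx => (mem_ball_zero_iff.1 (hK.mapsTo s (hI hs) hx)).le)
    (fun x hx => (hK.continuousOn_apply hx).mono hI) ((hK.continuousOn_deriv_apply hw).mono hI)

/-- `max s 0` extends the orbit continuously to all of `ℝ`. -/
theorem integral_apply_orbit (hK : IsKTransformSemigroup K) (hz : z ∈ ball (0 : ℂ) 1) {τ : ℝ}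
    (hτ : 0 ≤ τ) (ht₀ : 0 ≤ t₀) :
    ∫ s in 0..t₀, K s (K τ z) = ∫ s in τ..τ + t₀, K (max s 0) z := by
  have h := integral_comp_add_right (fun s => K (max s 0) z) τ (a := 0) (b := t₀)
  rw [zero_add, add_comm t₀] at h
  rw [← h]
  refine integral_congr fun s hs => ?_
  rw [uIcc_of_le ht₀] at hs
  simp only [max_eq_left (add_nonneg hs.1 hτ)]
  exact (hK.add_apply s hs.1 τ hτ z hz).symm

theorem hasDerivWithinAt_integral_apply_orbit (hK : IsKTransformSemigroup K)
    (hz : z ∈ ball (0 : ℂ) 1) (ht : 0 ≤ t) (ht₀ : 0 ≤ t₀) :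
    HasDerivWithinAt (fun τ => ∫ s in 0..t₀, K s (K τ z)) (K (t + t₀) z - K t z) (Ici 0) t := by
  have hc : Continuous fun s => K (max s 0) z := (hK.continuousOn_apply hz).comp_continuous
    (continuous_id.max continuous_const) fun s => le_max_right s 0
  have h := (hasDerivAt_integral_add_const hc t₀ t).hasDerivWithinAt (s := Ici 0)
  rw [max_eq_left ht, max_eq_left (add_nonneg ht ht₀)] at h
  exact h.congr (fun τ hτ => hK.integral_apply_orbit hz hτ ht₀) (hK.integral_apply_orbit hz ht ht₀)

theorem hasDerivWithinAt_apply (hK : IsKTransformSemigroup K) (hz : z ∈ ball (0 : ℂ) 1)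
    (ht : 0 ≤ t) (ht₀ : 0 < t₀) (hb : ∀ s ∈ Icc 0 t₀, ‖deriv (K s) (K t z) - 1‖ ≤ 1 / 2) :
    HasDerivWithinAt (fun s => K s z)
      ((∫ s in 0..t₀, deriv (K s) (K t z))⁻¹ * (K (t + t₀) z - K t z)) (Ici 0) t := by
  have hw := hK.mapsTo t ht hz
  have hH : ∀ x ∈ ball (0 : ℂ) 1, HasDerivAt (fun x => ∫ s in 0..t₀, K s x)
      (∫ s in 0..t₀, deriv (K s) x) x := fun x hx => hK.hasDerivAt_integral_apply ht₀.le hx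
  have hstrict : HasStrictDerivAt (fun x => ∫ s in 0..t₀, K s x)
      (∫ s in 0..t₀, deriv (K s) (K t z)) (K t z) := by
    have hdiff : DifferentiableOn ℂ (fun x => ∫ s in 0..t₀, K s x) (ball 0 1) :=
      fun x hx => (hH x hx).differentiableAt.differentiableWithinAt
    simpa only [(hH _ hw).deriv] using
      (hdiff.analyticAt (isOpen_ball.mem_nhds hw)).hasStrictDerivAt
  exact hstrict.hasDerivWithinAt_of_comp (f := fun s => K s z)
    (hK.integral_deriv_ne_zero hw ht₀ hb) (hK.continuousOn_apply hz t ht)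
    (hK.hasDerivWithinAt_integral_apply_orbit hz ht ht₀.le)

theorem differentiableWithinAt_apply (hK : IsKTransformSemigroup K) (hz : z ∈ ball (0 : ℂ) 1)
    (ht : 0 ≤ t) : DifferentiableWithinAt ℝ (fun s => K s z) (Ici 0) t := by
  obtain ⟨t₀, ht₀, hb⟩ := hK.exists_norm_deriv_sub_one_le (hK.mapsTo t ht hz)
  exact (hK.hasDerivWithinAt_apply hz ht ht₀ hb.self_of_nhds).differentiableWithinAt

/-- By the semigroup law, the right derivative at `t` is that of the orbit of `K t z` at `0`. -/
theorem hasDerivWithinAt_generator (hK : IsKTransformSemigroup K) (hz : z ∈ ball (0 : ℂ) 1)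
    (ht : 0 ≤ t) : HasDerivWithinAt (fun s => K s z) (generator K (K t z)) (Ici 0) t := by
  have hw := hK.mapsTo t ht hz
  have hshift : HasDerivWithinAt (fun s => K s z) (generator K (K t z)) (Ici t) t := by
    have h := (hK.differentiableWithinAt_apply hw le_rfl).hasDerivWithinAt.scomp_of_eq t
      ((hasDerivAt_id' t).sub_const t).hasDerivWithinAt
      (fun s (hs : t ≤ s) => (sub_nonneg.2 hs : 0 ≤ s - t)) (sub_self t).symm
    rw [one_smul] at h
    refine h.congr (fun s hs => ?_) ?_
    · simp [← hK.add_apply _ (sub_nonneg.2 (mem_Ici.1 hs)) t ht z hz]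
    · simp [hK.zero_apply _ hw]
  have h := (hK.differentiableWithinAt_apply hz ht).hasDerivWithinAt
  rwa [(uniqueDiffOn_Ici t t self_mem_Ici).eq_deriv _ (h.mono (Ici_subset_Ici.2 ht)) hshift] at h

theorem generator_zero (hK : IsKTransformSemigroup K) : generator K 0 = 0 :=
  ((hasDerivWithinAt_const 0 (Ici 0) (0 : ℂ)).congr (fun s hs => hK.apply_zero s hs)
    (hK.apply_zero 0 le_rfl)).derivWithin (uniqueDiffOn_Ici 0 0 self_mem_Ici)

theorem differentiableOn_generator (hK : IsKTransformSemigroup K) :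
    DifferentiableOn ℂ (generator K) (ball (0 : ℂ) 1) := by
  intro z hz
  obtain ⟨t₀, ht₀, hb⟩ := hK.exists_norm_deriv_sub_one_le hz
  set H : ℂ → ℂ := fun x => ∫ s in 0..t₀, K s x
  have hH : ∀ x ∈ ball (0 : ℂ) 1, HasDerivAt H (∫ s in 0..t₀, deriv (K s) x) x :=
    fun x hx => hK.hasDerivAt_integral_apply ht₀.le hx
  have hG : generator K =ᶠ[𝓝 z] fun x => (deriv H x)⁻¹ * (K t₀ x - x) := by
    filter_upwards [hb, isOpen_ball.mem_nhds hz] with x hbx hx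
    have h := hK.hasDerivWithinAt_apply hx le_rfl ht₀ (by rwa [hK.zero_apply x hx])
    rw [zero_add, hK.zero_apply x hx, ← (hH x hx).deriv] at h
    exact h.derivWithin (uniqueDiffOn_Ici 0 0 self_mem_Ici)
  have hHdiff : DifferentiableOn ℂ H (ball 0 1) :=
    fun x hx => (hH x hx).differentiableAt.differentiableWithinAt
  have hne : deriv H z ≠ 0 :=
    (hH z hz).deriv ▸ hK.integral_deriv_ne_zero hz ht₀ hb.self_of_nhds
  have hball := isOpen_ball.mem_nhds hz
  refine (hG.differentiableAt_iff.2 ?_).differentiableWithinAt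
  exact (((hHdiff.deriv isOpen_ball).differentiableAt hball).inv hne).mul
    (((hK.differentiableOn t₀ ht₀.le).differentiableAt hball).sub differentiableAt_id)

/-- By Schwarz's lemma `s ↦ Re (w̄ K_s w)` is maximal at `s = 0`, so its right derivative there is
nonpositive. -/
theorem re_conj_mul_generator_nonpos (hK : IsKTransformSemigroup K) (hw : w ∈ ball (0 : ℂ) 1) :
    (conj w * generator K w).re ≤ 0 := by
  have hd : HasDerivWithinAt (fun s => (conj w * K s w).re) (conj w * generator K w).re
      (Ici 0) 0 := by
    have h := hK.hasDerivWithinAt_generator hw le_rfl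
    rw [hK.zero_apply w hw] at h
    exact Complex.reCLM.hasFDerivAt.comp_hasDerivWithinAt 0 (h.const_mul (conj w))
  have hmax : IsLocalMaxOn (fun s => (conj w * K s w).re) (Ici 0) 0 := by
    refine eventually_of_mem self_mem_nhdsWithin fun s hs => ?_
    have hschwarz : ‖K s w‖ ≤ ‖w‖ :=
      Complex.norm_le_norm_of_mapsTo_ball (hK.differentiableOn s hs)
        ((hK.mapsTo s hs).mono_right ball_subset_closedBall) (hK.apply_zero s hs)
        (mem_ball_zero_iff.1 hw)
    calc (conj w * K s w).re ≤ ‖conj w * K s w‖ := Complex.re_le_norm _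
      _ ≤ ‖w‖ ^ 2 := by
        rw [norm_mul, Complex.norm_conj, sq]
        exact mul_le_mul_of_nonneg_left hschwarz (norm_nonneg w)
      _ = (conj w * K 0 w).re := by
        rw [hK.zero_apply w hw, Complex.conj_mul', ← Complex.ofReal_pow, Complex.ofReal_re]
  simpa using hmax.hasFDerivWithinAt_nonpos hd.hasFDerivWithinAt
    (mem_posTangentConeAt_of_segment_subset
      ((segment_subset_Icc (by norm_num : (0 : ℝ) ≤ 0 + 1)).trans Icc_subset_Ici_self))

end IsKTransformSemigroup

/-- Every continuous composition semigroup of K-transforms (holomorphic self-maps of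
the open unit disc fixing `0`, with `K_0 = id`, `K_{s+t} = K_s ∘ K_t`, continuous in
`t` locally uniformly in `z`) has a generator: a holomorphic `u : 𝔻 → ℂ` with
`Re u ≥ 0` such that `d/dt K_t(z) = -K_t(z)·u(K_t(z))`. -/
theorem Ksemigroup_generator_exists
    (K : ℝ → ℂ → ℂ)
    (hdiff : ∀ t ≥ (0 : ℝ), DifferentiableOn ℂ (K t) (ball (0 : ℂ) 1))
    (hmaps : ∀ t ≥ (0 : ℝ), MapsTo (K t) (ball (0 : ℂ) 1) (ball (0 : ℂ) 1))
    (hzero : ∀ t ≥ (0 : ℝ), K t 0 = 0)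
    (hid : ∀ z ∈ ball (0 : ℂ) 1, K 0 z = z)
    (hsg : ∀ s ≥ (0 : ℝ), ∀ t ≥ (0 : ℝ), ∀ z ∈ ball (0 : ℂ) 1, K (s + t) z = K s (K t z))
    (hcont : ∀ t₀ ≥ (0 : ℝ),
      TendstoLocallyUniformlyOn K (K t₀) (nhdsWithin t₀ (Ici 0)) (ball (0 : ℂ) 1)) :
    ∃ u : ℂ → ℂ,
      DifferentiableOn ℂ u (ball (0 : ℂ) 1) ∧
      (∀ z ∈ ball (0 : ℂ) 1, 0 ≤ (u z).re) ∧
      ∀ z ∈ ball (0 : ℂ) 1, ∀ t ≥ (0 : ℝ),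
        HasDerivWithinAt (fun s => K s z) (-(K t z) * u (K t z)) (Ici 0) t := by
  have hK : IsKTransformSemigroup K := ⟨hdiff, hmaps, hzero, hid, hsg, hcont⟩
  have hG := hK.differentiableOn_generator
  refine ⟨fun w => -dslope (generator K) 0 w,
    ((Complex.differentiableOn_dslope (ball_mem_nhds 0 one_pos)).2 hG).neg,
    fun w hw => re_neg_dslope_nonneg isOpen_ball hG hK.generator_zero
      (fun x hx => hK.re_conj_mul_generator_nonpos hx) hw,
    fun z hz t ht => ?_⟩
  have hslope := sub_smul_dslope (generator K) 0 (K t z)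
  rw [sub_zero, hK.generator_zero, sub_zero, smul_eq_mul] at hslope
  rw [neg_mul_neg, hslope]
  exact hK.hasDerivWithinAt_generator hz ht
end

section
/- Let u : 𝔻 → ℂ be holomorphic with Re u(z) ≥ 0 for all z ∈ 𝔻, and let (K_t)_{t≥0} be a family of holomorphic maps K_t : 𝔻 → 𝔻 such that K_0(z) = z and, for every z ∈ 𝔻, t ↦ K_t(z) is differentiable with d/dt K_t(z) = −K_t(z)·u(K_t(z)) for all t ≥ 0. Then (K_t)_{t≥0} is a continuous composition semigroup of K-transforms: K_t(0) = 0 for all t ≥ 0, K_{s+t} = K_s ∘ K_t for all s, t ≥ 0, and (t, z) ↦ K_t(z) is continuous in t locally uniformly in z. Moreover, the family solving this initial value problem is unique. -/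
/-!
Along a trajectory `γ t = K t z` one has `d/dt ‖γ‖² = -2 ‖γ‖² Re u(γ) ≤ 0`, so the trajectory
stays in the closed disc of radius `‖z‖ < 1`. There the vector field `w ↦ -w u(w)` is Lipschitz
and bounded: Lipschitz gives uniqueness of the initial value problem (Gronwall), whence the
semigroup law, since `s ↦ K (s + t) z` and `s ↦ K s (K t z)` solve the same problem; boundedness
makes `t ↦ K t z` Lipschitz uniformly for `z` in a compact subset of the disc.
-/

open Metric Set Filter Topology NNReal

lemma HasDerivWithinAt.comp_add_const_of_mapsTo {E : Type*} [NormedAddCommGroup E]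
    [NormedSpace ℝ E] {f : ℝ → E} {f' : E} {s t : Set ℝ} {x a : ℝ}
    (hf : HasDerivWithinAt f f' s (x + a)) (hst : MapsTo (· + a) t s) :
    HasDerivWithinAt (fun y => f (y + a)) f' t x := by
  simpa [Function.comp_def] using hf.scomp x ((hasDerivWithinAt_id x t).add_const a) hst

lemma antitoneOn_norm_of_hasDerivWithinAt_neg_mul {γ c : ℝ → ℂ}
    (hγ : ∀ t ≥ (0 : ℝ), HasDerivWithinAt γ (-(γ t) * c t) (Ici 0) t)
    (hc : ∀ t ≥ (0 : ℝ), 0 ≤ (c t).re) :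
    AntitoneOn (‖γ ·‖) (Ici 0) := by
  have hsq : ∀ t ≥ (0 : ℝ),
      HasDerivWithinAt (‖γ ·‖ ^ 2) (-2 * ‖γ t‖ ^ 2 * (c t).re) (Ici 0) t := by
    intro t ht
    convert (hγ t ht).norm_sq using 1
    rw [Complex.inner, mul_right_comm (-(γ t)), neg_mul (γ t), Complex.mul_conj',
      ← Complex.ofReal_pow, ← Complex.ofReal_neg, Complex.re_ofReal_mul]
    ring
  have hsq_anti : AntitoneOn (‖γ ·‖ ^ 2) (Ici 0) := by
    refine antitoneOn_of_hasDerivWithinAt_nonpos (f' := fun t => -2 * ‖γ t‖ ^ 2 * (c t).re)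
      (convex_Ici 0)
      (fun t ht => (hsq t ht).continuousWithinAt) (fun t ht => ?_) (fun t ht => ?_)
    · rw [interior_Ici] at ht ⊢
      exact (hsq t ht.le).mono Ioi_subset_Ici_self
    · rw [interior_Ici] at ht
      nlinarith [hc t ht.le, sq_nonneg ‖γ t‖]
  exact fun s hs t ht hst =>
    (pow_le_pow_iff_left₀ (norm_nonneg _) (norm_nonneg _) two_ne_zero).1 (hsq_anti hs ht hst)

lemma exists_lipschitzOnWith_closedBall_of_differentiableOn {E : Type*} [NormedAddCommGroup E]
    [NormedSpace ℂ E] [CompleteSpace E] {f : ℂ → E} {c : ℂ} {r R : ℝ}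
    (hf : DifferentiableOn ℂ f (ball c R)) (hr : r < R) :
    ∃ C, LipschitzOnWith C f (closedBall c r) :=
  (((hf.contDiffOn (n := 1) isOpen_ball).restrict_scalars ℝ).mono
    (closedBall_subset_ball hr)).exists_lipschitzOnWith one_ne_zero (convex_closedBall c r)
    (isCompact_closedBall c r)

lemma tendstoUniformlyOn_of_lipschitzOnWith {α β γ : Type*} [PseudoMetricSpace β]
    [PseudoMetricSpace γ] {F : β → α → γ} {S : Set β} {s : Set α} {L : ℝ≥0}
    (hF : ∀ w ∈ s, LipschitzOnWith L (F · w) S) {t₀ : β} (ht₀ : t₀ ∈ S) :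
    TendstoUniformlyOn F (F t₀) (𝓝[S] t₀) s := by
  rw [Metric.tendstoUniformlyOn_iff]
  intro ε hε
  have hL : (0 : ℝ) < L + 1 := by positivity
  have hclose : ∀ᶠ t in 𝓝[S] t₀, dist t t₀ < ε / (L + 1) :=
    nhdsWithin_le_nhds (ball_mem_nhds t₀ (div_pos hε hL))
  filter_upwards [hclose, self_mem_nhdsWithin] with t ht htS w hw
  calc dist (F t₀ w) (F t w) ≤ L * dist t₀ t := (hF w hw).dist_le_mul t₀ ht₀ t htS
    _ ≤ (L + 1) * dist t t₀ := by rw [dist_comm]; gcongr; linarith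
    _ < (L + 1) * (ε / (L + 1)) := by gcongr
    _ = ε := mul_div_cancel₀ ε hL.ne'

section UnitDisc

variable {u : ℂ → ℂ} {γ δ : ℝ → ℂ}

lemma norm_le_norm_zero_of_hasDerivWithinAt (hure : ∀ z ∈ ball (0 : ℂ) 1, 0 ≤ (u z).re)
    (hγ_mem : ∀ t ≥ (0 : ℝ), γ t ∈ ball (0 : ℂ) 1)
    (hγ : ∀ t ≥ (0 : ℝ), HasDerivWithinAt γ (-(γ t) * u (γ t)) (Ici 0) t)
    {t : ℝ} (ht : 0 ≤ t) : ‖γ t‖ ≤ ‖γ 0‖ :=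
  antitoneOn_norm_of_hasDerivWithinAt_neg_mul hγ (fun s hs => hure _ (hγ_mem s hs))
    self_mem_Ici ht ht

lemma eqOn_of_hasDerivWithinAt_of_mem_ball (hu : DifferentiableOn ℂ u (ball (0 : ℂ) 1))
    (hure : ∀ z ∈ ball (0 : ℂ) 1, 0 ≤ (u z).re)
    (hγ_mem : ∀ t ≥ (0 : ℝ), γ t ∈ ball (0 : ℂ) 1)
    (hγ : ∀ t ≥ (0 : ℝ), HasDerivWithinAt γ (-(γ t) * u (γ t)) (Ici 0) t)
    (hδ_mem : ∀ t ≥ (0 : ℝ), δ t ∈ ball (0 : ℂ) 1)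
    (hδ : ∀ t ≥ (0 : ℝ), HasDerivWithinAt δ (-(δ t) * u (δ t)) (Ici 0) t)
    (h₀ : γ 0 = δ 0) :
    EqOn γ δ (Ici 0) := by
  intro T hT
  set r := ‖γ 0‖
  have hr : r < 1 := mem_ball_zero_iff.1 (hγ_mem 0 le_rfl)
  obtain ⟨C, hC⟩ := exists_lipschitzOnWith_closedBall_of_differentiableOn
    ((differentiableOn_id.neg).mul hu) hr
  have hγ_r : ∀ t ∈ Ico 0 T, γ t ∈ closedBall 0 r := fun t ht =>
    mem_closedBall_zero_iff.2 (norm_le_norm_zero_of_hasDerivWithinAt hure hγ_mem hγ ht.1)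
  have hδ_r : ∀ t ∈ Ico 0 T, δ t ∈ closedBall 0 r := fun t ht =>
    mem_closedBall_zero_iff.2 ((norm_le_norm_zero_of_hasDerivWithinAt hure hδ_mem hδ ht.1).trans_eq
      (congrArg norm h₀.symm))
  exact ODE_solution_unique_of_mem_Icc_right (v := fun _ w => -w * u w) (fun _ _ => hC)
    (fun t ht => (hγ t ht.1).continuousWithinAt.mono Icc_subset_Ici_self)
    (fun t ht => (hγ t ht.1).mono (Ici_subset_Ici.2 ht.1)) hγ_r
    (fun t ht => (hδ t ht.1).continuousWithinAt.mono Icc_subset_Ici_self)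
    (fun t ht => (hδ t ht.1).mono (Ici_subset_Ici.2 ht.1)) hδ_r h₀ ⟨hT, le_rfl⟩

lemma tendstoLocallyUniformlyOn_of_hasDerivWithinAt {K : ℝ → ℂ → ℂ}
    (hu : ContinuousOn u (ball (0 : ℂ) 1)) (hure : ∀ z ∈ ball (0 : ℂ) 1, 0 ≤ (u z).re)
    (hmaps : ∀ t ≥ (0 : ℝ), MapsTo (K t) (ball (0 : ℂ) 1) (ball (0 : ℂ) 1))
    (hid : ∀ z ∈ ball (0 : ℂ) 1, K 0 z = z)
    (hode : ∀ z ∈ ball (0 : ℂ) 1, ∀ t ≥ (0 : ℝ),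
      HasDerivWithinAt (fun s => K s z) (-(K t z) * u (K t z)) (Ici 0) t)
    {t₀ : ℝ} (ht₀ : 0 ≤ t₀) :
    TendstoLocallyUniformlyOn K (K t₀) (𝓝[Ici 0] t₀) (ball (0 : ℂ) 1) := by
  rw [tendstoLocallyUniformlyOn_iff_forall_isCompact isOpen_ball]
  intro k hk hkc
  obtain ⟨r, hr, hkr⟩ := exists_lt_subset_ball hkc.isClosed hk
  obtain ⟨M, hM⟩ := (isCompact_closedBall (0 : ℂ) r).exists_bound_of_continuousOn
    ((continuousOn_id.neg.mul hu).mono (closedBall_subset_ball hr))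
  refine tendstoUniformlyOn_of_lipschitzOnWith (L := M.toNNReal) (fun w hw => ?_) ht₀
  have hw₁ := hk hw
  refine (convex_Ici 0).lipschitzOnWith_of_nnnorm_hasDerivWithin_le (hode w hw₁)
    (fun t ht => ?_)
  have hKr : K t w ∈ closedBall 0 r := by
    rw [mem_closedBall_zero_iff]
    calc ‖K t w‖ ≤ ‖K 0 w‖ := norm_le_norm_zero_of_hasDerivWithinAt (γ := (K · w)) hure
          (fun s hs => hmaps s hs hw₁) (hode w hw₁) ht
      _ = ‖w‖ := by rw [hid w hw₁]
      _ ≤ r := (mem_ball_zero_iff.1 (hkr hw)).le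
  rw [← NNReal.coe_le_coe, coe_nnnorm]
  exact (hM _ hKr).trans (Real.le_coe_toNNReal M)

end UnitDisc

theorem Ksemigroup_of_generator_general
    (u : ℂ → ℂ)
    (hu : DifferentiableOn ℂ u (ball (0 : ℂ) 1))
    (hure : ∀ z ∈ ball (0 : ℂ) 1, 0 ≤ (u z).re)
    (K : ℝ → ℂ → ℂ)
    (hmaps : ∀ t ≥ (0 : ℝ), MapsTo (K t) (ball (0 : ℂ) 1) (ball (0 : ℂ) 1))
    (hid : ∀ z ∈ ball (0 : ℂ) 1, K 0 z = z)
    (hode : ∀ z ∈ ball (0 : ℂ) 1, ∀ t ≥ (0 : ℝ),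
      HasDerivWithinAt (fun s => K s z) (-(K t z) * u (K t z)) (Ici 0) t) :
    (∀ t ≥ (0 : ℝ), K t 0 = 0) ∧
    (∀ s ≥ (0 : ℝ), ∀ t ≥ (0 : ℝ), ∀ z ∈ ball (0 : ℂ) 1, K (s + t) z = K s (K t z)) ∧
    (∀ t₀ ≥ (0 : ℝ),
      TendstoLocallyUniformlyOn K (K t₀) (nhdsWithin t₀ (Ici 0)) (ball (0 : ℂ) 1)) ∧
    (∀ K' : ℝ → ℂ → ℂ,
      (∀ t ≥ (0 : ℝ), DifferentiableOn ℂ (K' t) (ball (0 : ℂ) 1)) →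
      (∀ t ≥ (0 : ℝ), MapsTo (K' t) (ball (0 : ℂ) 1) (ball (0 : ℂ) 1)) →
      (∀ z ∈ ball (0 : ℂ) 1, K' 0 z = z) →
      (∀ z ∈ ball (0 : ℂ) 1, ∀ t ≥ (0 : ℝ),
        HasDerivWithinAt (fun s => K' s z) (-(K' t z) * u (K' t z)) (Ici 0) t) →
      ∀ t ≥ (0 : ℝ), ∀ z ∈ ball (0 : ℂ) 1, K' t z = K t z) := by
  have hmem : ∀ z ∈ ball (0 : ℂ) 1, ∀ t ≥ (0 : ℝ), K t z ∈ ball (0 : ℂ) 1 :=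
    fun z hz t ht => hmaps t ht hz
  refine ⟨fun t ht => ?_, fun s hs t ht z hz => ?_,
    fun t₀ => tendstoLocallyUniformlyOn_of_hasDerivWithinAt hu.continuousOn hure hmaps hid hode,
    fun K' _ hmaps' hid' hode' t ht z hz => ?_⟩
  · have h0 : (0 : ℂ) ∈ ball (0 : ℂ) 1 := mem_ball_self one_pos
    simpa [hid 0 h0] using norm_le_norm_zero_of_hasDerivWithinAt hure (hmem 0 h0) (hode 0 h0) ht
  · have hw := hmaps t ht hz
    have hshift : ∀ σ ≥ (0 : ℝ), HasDerivWithinAt (fun σ => K (σ + t) z)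
        (-(K (σ + t) z) * u (K (σ + t) z)) (Ici 0) σ := fun σ hσ =>
      (hode z hz (σ + t) (add_nonneg hσ ht)).comp_add_const_of_mapsTo
        fun x hx => add_nonneg hx ht
    exact eqOn_of_hasDerivWithinAt_of_mem_ball hu hure
      (fun σ hσ => hmaps _ (add_nonneg hσ ht) hz) hshift (hmem _ hw) (hode _ hw)
      (by rw [zero_add, hid _ hw]) hs
  · exact eqOn_of_hasDerivWithinAt_of_mem_ball hu hure (fun τ hτ => hmaps' τ hτ hz) (hode' z hz)
      (hmem z hz) (hode z hz) (by rw [hid' z hz, hid z hz]) ht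

/-- Conversely, given a holomorphic `u : 𝔻 → ℂ` with `Re u ≥ 0`, any family of
holomorphic self-maps `K_t` of the disc with `K_0 = id` solving
`d/dt K_t(z) = -K_t(z)·u(K_t(z))` is a continuous composition semigroup of
K-transforms (`K_t(0) = 0`, `K_{s+t} = K_s ∘ K_t`, continuity in `t` locally
uniformly in `z`), and the solution of this initial value problem is unique. -/
theorem Ksemigroup_of_generator
    (u : ℂ → ℂ)
    (hu : DifferentiableOn ℂ u (ball (0 : ℂ) 1))
    (hure : ∀ z ∈ ball (0 : ℂ) 1, 0 ≤ (u z).re)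
    (K : ℝ → ℂ → ℂ)
    (hdiff : ∀ t ≥ (0 : ℝ), DifferentiableOn ℂ (K t) (ball (0 : ℂ) 1))
    (hmaps : ∀ t ≥ (0 : ℝ), MapsTo (K t) (ball (0 : ℂ) 1) (ball (0 : ℂ) 1))
    (hid : ∀ z ∈ ball (0 : ℂ) 1, K 0 z = z)
    (hode : ∀ z ∈ ball (0 : ℂ) 1, ∀ t ≥ (0 : ℝ),
      HasDerivWithinAt (fun s => K s z) (-(K t z) * u (K t z)) (Ici 0) t) :
    (∀ t ≥ (0 : ℝ), K t 0 = 0) ∧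
    (∀ s ≥ (0 : ℝ), ∀ t ≥ (0 : ℝ), ∀ z ∈ ball (0 : ℂ) 1, K (s + t) z = K s (K t z)) ∧
    (∀ t₀ ≥ (0 : ℝ),
      TendstoLocallyUniformlyOn K (K t₀) (nhdsWithin t₀ (Ici 0)) (ball (0 : ℂ) 1)) ∧
    (∀ K' : ℝ → ℂ → ℂ,
      (∀ t ≥ (0 : ℝ), DifferentiableOn ℂ (K' t) (ball (0 : ℂ) 1)) →
      (∀ t ≥ (0 : ℝ), MapsTo (K' t) (ball (0 : ℂ) 1) (ball (0 : ℂ) 1)) →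
      (∀ z ∈ ball (0 : ℂ) 1, K' 0 z = z) →
      (∀ z ∈ ball (0 : ℂ) 1, ∀ t ≥ (0 : ℝ),
        HasDerivWithinAt (fun s => K' s z) (-(K' t z) * u (K' t z)) (Ici 0) t) →
      ∀ t ≥ (0 : ℝ), ∀ z ∈ ball (0 : ℂ) 1, K' t z = K t z) :=
  Ksemigroup_of_generator_general u hu hure K hmaps hid hode
end

section
/- Let μ be a probability measure on the unit circle S¹ that is not concentrated in one point, and suppose μ can be embedded into a continuous monotone convolution semigroup, i.e. there exist a continuous composition semigroup of K-transforms (K_t)_{t≥0} with generator u (so d/dt K_t(z) = −K_t(z)·u(K_t(z)), u holomorphic on 𝔻 with Re u ≥ 0) and t₀ ≥ 0 with K_μ = K_{t₀}. Then: K_μ′(z) ≠ 0 for all z ∈ 𝔻; the iterates K_μ^{∘n} satisfy lim_{n→∞} −K_μ^{∘n}(z)/(K_μ^{∘n})′(z) = −z·u(z)/u(0) locally uniformly on 𝔻; in particular this limit is of the form α·z·u(z) with the nonzero constant α = −1/u(0), and K_μ′(0) = e^{−t₀·u(0)}. -/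
/-!
Along the flow, `d/dt log K_t(z) = -u(K_t(z))`, so `K_t(z) = z · exp (-∫₀ᵗ u(K_s(z)) ds)`.
Hence `K_t(z) ≠ 0` for `z ≠ 0`, `‖K_t(z)‖ ≤ ‖z‖`, `K_t'(0) = e^{-t u(0)}`, and `K_t → 0`
locally uniformly as soon as `re u > 0`. Differentiating `K_{t+s} = K_t ∘ K_s` at `s = 0` gives
`K_t(z) u(K_t(z)) = K_t'(z) z u(z)`, so `-K_t/K_t' = -z u(z)/u(K_t(z)) → -z u(z)/u(0)`; the
iterates of `K_μ` are the `K_{n t₀}`. Finally `re u > 0` on the disc: otherwise, by the open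
mapping theorem, `u` is a purely imaginary constant, `K_{t₀}` is a rotation, and a probability
measure whose K-transform is a rotation is a point mass.
-/

open MeasureTheory Metric

open Set Filter

open Topology

theorem eq_mul_exp_neg_integral_of_hasDerivWithinAt {γ a : ℝ → ℂ}
    (ha : ContinuousOn a (Ici 0))
    (hγ : ∀ t ≥ (0 : ℝ), HasDerivWithinAt γ (-γ t * a t) (Ici 0) t) {t : ℝ} (ht : 0 ≤ t) :
    γ t = γ 0 * Complex.exp (-∫ s in (0 : ℝ)..t, a s) := by
  -- `a ∘ max 0` is a continuous extension of `a` to all of `ℝ`, so FTC applies everywhere.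
  have hmax : Continuous fun s : ℝ => a (max s 0) :=
    ha.comp_continuous (continuous_id.max continuous_const) fun s => le_max_right s 0
  set F : ℝ → ℂ := fun τ => ∫ s in (0 : ℝ)..τ, a (max s 0)
  have hF : ∀ τ, HasDerivAt F (a (max τ 0)) τ := fun τ =>
    (hmax.integral_hasStrictDerivAt 0 τ).hasDerivAt
  have hconst : ∀ x ∈ Icc 0 t, γ x * Complex.exp (F x) = γ 0 * Complex.exp (F 0) := by
    refine constant_of_has_deriv_right_zero ?_ fun x hx => ?_
    · exact fun x hx => ((hγ x hx.1).continuousWithinAt.mono (Icc_subset_Ici_self)).mul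
        (hF x).cexp.continuousAt.continuousWithinAt
    · have hx0 : 0 ≤ x := hx.1
      have := ((hγ x hx0).mono (Ici_subset_Ici.2 hx0)).mul (hF x).cexp.hasDerivWithinAt
      rw [max_eq_left hx0] at this
      exact this.congr_deriv (by ring)
  have hFt : F t = ∫ s in (0 : ℝ)..t, a s :=
    intervalIntegral.integral_congr fun s hs => by
      rw [uIcc_of_le ht] at hs
      simp only [max_eq_left hs.1]
  have h := hconst t ⟨ht, le_rfl⟩
  simp only [F, intervalIntegral.integral_same, Complex.exp_zero, mul_one] at h
  rw [← hFt, Complex.exp_neg, ← h, mul_inv_cancel_right₀ (Complex.exp_ne_zero _)]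

theorem mul_generator_eq_deriv_mul {K : ℝ → ℂ → ℂ} {u : ℂ → ℂ} {z : ℂ} {t : ℝ}
    (ht : 0 ≤ t) (hKt : DifferentiableAt ℂ (K t) z) (hK0 : K 0 z = z)
    (hsg : ∀ s ≥ (0 : ℝ), K (t + s) z = K t (K s z))
    (hode : ∀ s ≥ (0 : ℝ),
      HasDerivWithinAt (fun s => K s z) (-(K s z) * u (K s z)) (Ici 0) s) :
    K t z * u (K t z) = deriv (K t) z * (z * u z) := by
  -- Differentiate `s ↦ K (t + s) z = K t (K s z)` at `s = 0` in two ways.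
  have hshift : HasDerivWithinAt (fun s => K (t + s) z) (-(K t z) * u (K t z)) (Ici 0) 0 := by
    have hmaps : MapsTo (t + ·) (Ici (0 : ℝ)) (Ici 0) := fun s hs => add_nonneg ht hs
    have := (hode t ht).scomp_of_eq 0 ((hasDerivAt_id (0 : ℝ)).const_add t).hasDerivWithinAt
      hmaps (add_zero t).symm
    simpa only [Function.comp_def, one_smul, id] using this
  have hchain :
      HasDerivWithinAt (fun s => K (t + s) z) (deriv (K t) z * (-z * u z)) (Ici 0) 0 := by
    have h0 := hode 0 le_rfl
    rw [hK0] at h0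
    refine (hKt.hasDerivAt.comp_hasDerivWithinAt_of_eq 0 h0 hK0.symm).congr hsg ?_
    simpa using hsg 0 le_rfl
  have := (hshift.derivWithin (uniqueDiffOn_Ici 0 0 self_mem_Ici)).symm.trans
    (hchain.derivWithin (uniqueDiffOn_Ici 0 0 self_mem_Ici))
  linear_combination -this

theorem iterate_eqOn_of_eqOn {α : Type*} {U : Set α} {K : ℝ → α → α} {f : α → α}
    {τ : ℝ} (hτ : 0 ≤ τ) (hmaps : ∀ t ≥ (0 : ℝ), MapsTo (K t) U U)
    (hid : ∀ z ∈ U, K 0 z = z)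
    (hsg : ∀ s ≥ (0 : ℝ), ∀ t ≥ (0 : ℝ), ∀ z ∈ U, K (s + t) z = K s (K t z))
    (hf : EqOn f (K τ) U) (n : ℕ) : EqOn f^[n] (K (n * τ)) U := by
  induction n with
  | zero => intro z hz; simp [hid z hz]
  | succ n ih =>
    intro z hz
    have hnτ : 0 ≤ (n : ℝ) * τ := by positivity
    rw [Function.iterate_succ_apply', ih hz, hf (hmaps _ hnτ hz), ← hsg τ hτ _ hnτ z hz]
    congr 1
    push_cast
    ring

theorem TendstoUniformlyOn.mul_left_of_norm_le {ι α R : Type*} [SeminormedRing R]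
    {p : Filter ι} {s : Set α} {F : ι → α → R} {c : R} {g : α → R} {M : ℝ}
    (hF : TendstoUniformlyOn F (fun _ => c) p s) (hg : ∀ x ∈ s, ‖g x‖ ≤ M) :
    TendstoUniformlyOn (fun i x => g x * F i x) (fun x => g x * c) p s := by
  rw [Metric.tendstoUniformlyOn_iff] at hF ⊢
  intro ε hε
  have hM : 0 < |M| + 1 := by positivity
  filter_upwards [hF (ε / (|M| + 1)) (by positivity)] with i hi x hx
  calc dist (g x * c) (g x * F i x) = ‖g x * (c - F i x)‖ := by rw [dist_eq_norm, mul_sub]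
    _ ≤ ‖g x‖ * dist c (F i x) := by rw [dist_eq_norm]; exact norm_mul_le _ _
    _ ≤ (|M| + 1) * dist c (F i x) := by gcongr; linarith [hg x hx, le_abs_self M]
    _ < (|M| + 1) * (ε / (|M| + 1)) := by gcongr; exact hi x hx
    _ = ε := mul_div_cancel₀ _ hM.ne'

section RealPart

variable {U : Set ℂ} {f : ℂ → ℂ}

theorem eqOn_of_re_nonneg_of_re_eq_zero (hf : DifferentiableOn ℂ f U) (hU : IsOpen U)
    (hU' : IsPreconnected U) (hre : ∀ z ∈ U, 0 ≤ (f z).re) {z₀ : ℂ} (hz₀ : z₀ ∈ U)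
    (h : (f z₀).re = 0) : EqOn f (fun _ => f z₀) U := by
  rcases (hf.analyticOnNhd hU).is_constant_or_isOpen hU' with ⟨w, hw⟩ | hopen
  · exact fun z hz => (hw z hz).trans (hw z₀ hz₀).symm
  -- Otherwise `f '' U` is a neighbourhood of `f z₀`, which lies on the boundary of `{0 ≤ re}`.
  obtain ⟨ε, hε, hball⟩ :=
    Metric.isOpen_iff.1 (hopen U subset_rfl hU) _ (mem_image_of_mem f hz₀)
  obtain ⟨z, hz, hfz⟩ := hball (show f z₀ - ((ε / 2 : ℝ) : ℂ) ∈ ball (f z₀) ε by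
    rw [mem_ball, dist_eq_norm, sub_sub_cancel_left, norm_neg, Complex.norm_real,
      Real.norm_eq_abs, abs_of_pos (half_pos hε)]
    exact half_lt_self hε)
  have := hre z hz
  rw [hfz, Complex.sub_re, h, Complex.ofReal_re] at this
  linarith

theorem re_pos_of_re_nonneg (hf : DifferentiableOn ℂ f U) (hU : IsOpen U)
    (hU' : IsPreconnected U) (hre : ∀ z ∈ U, 0 ≤ (f z).re) {z₀ : ℂ} (hz₀ : z₀ ∈ U)
    (h : 0 < (f z₀).re) : ∀ z ∈ U, 0 < (f z).re := by
  intro z hz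
  refine (hre z hz).lt_of_ne fun hz0 => h.ne' ?_
  rw [eqOn_of_re_nonneg_of_re_eq_zero hf hU hU' hre hz hz0.symm hz₀, hz0]

end RealPart

theorem one_sub_re_div_one_sub {w : ℂ} (hw : ‖w‖ = 1 / 2) :
    1 - (w / (1 - w)).re = 3 * ‖w - 1 / 2‖ ^ 2 / ‖1 - w‖ ^ 2 := by
  have hw1 : 1 - w ≠ 0 := fun h => by norm_num [← sub_eq_zero.1 h] at hw
  have hsq : w.re * w.re + w.im * w.im = 1 / 4 := by
    rw [← Complex.normSq_apply, Complex.normSq_eq_norm_sq, hw]; norm_num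
  rw [← Complex.normSq_eq_norm_sq, ← Complex.normSq_eq_norm_sq, Complex.div_re,
    ← add_div, eq_div_iff (Complex.normSq_pos.2 hw1).ne', sub_mul,
    div_mul_cancel₀ _ (Complex.normSq_pos.2 hw1).ne']
  simp only [Complex.normSq_apply, Complex.sub_re, Complex.sub_im, Complex.one_re, Complex.one_im]
  norm_num
  linear_combination -hsq

theorem MeasureTheory.Measure.eq_dirac_of_ae_eq {α : Type*} [MeasurableSpace α]
    {μ : Measure α} [IsProbabilityMeasure μ] {x₀ : α} (h : ∀ᵐ x ∂μ, x = x₀) :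
    μ = Measure.dirac x₀ :=
  calc μ = μ.map fun x => x := Measure.map_id'.symm
    _ = μ.map fun _ => x₀ := Measure.map_congr h
    _ = Measure.dirac x₀ := by rw [Measure.map_const, measure_univ, one_smul]

theorem eq_dirac_of_psiM_eq_one {μ : Measure Circle} [IsProbabilityMeasure μ] {x₀ : Circle}
    (h : psiM μ ((x₀⁻¹ : Circle) / 2) = 1) : μ = Measure.dirac x₀ := by
  set w : Circle → ℂ := fun x => (x₀⁻¹ * x : Circle) / 2
  have hw : ∀ x, ‖w x‖ = 1 / 2 := fun x => by simp [w, Circle.norm_coe]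
  have hw1 : ∀ x, 1 - w x ≠ 0 := fun x h => by
    have := hw x
    rw [← sub_eq_zero.1 h] at this
    norm_num at this
  have hψ : psiM μ ((x₀⁻¹ : Circle) / 2) = ∫ x, w x / (1 - w x) ∂μ := by
    simp only [psiM, w, Circle.coe_mul]; ring_nf
  have hint : Integrable (fun x => w x / (1 - w x)) μ :=
    (Continuous.div (by fun_prop) (by fun_prop) hw1).integrable_of_hasCompactSupport
      (.of_compactSpace _)
  have hint_re : Integrable (fun x => (w x / (1 - w x)).re) μ := hint.re
  -- `g ≥ 0` has integral `1 - re ψ_μ = 0`, and vanishes only where `w x = 1/2`, i.e. `x = x₀`.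
  set g : Circle → ℝ := fun x => 1 - (w x / (1 - w x)).re
  have hgi : Integrable g μ := (integrable_const 1).sub hint_re
  have hg : ∀ x, g x = 3 * ‖w x - 1 / 2‖ ^ 2 / ‖1 - w x‖ ^ 2 := fun x =>
    one_sub_re_div_one_sub (hw x)
  have hgint : ∫ x, g x ∂μ = 0 := by
    have hre := integral_re hint
    simp only [RCLike.re_to_complex] at hre
    simp only [g]
    rw [integral_sub (integrable_const 1) hint_re, hre, ← hψ, h]
    simp
  have hae := (integral_eq_zero_iff_of_nonneg (fun x => by
    simp only [Pi.zero_apply, hg]; positivity) hgi).1 hgint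
  refine Measure.eq_dirac_of_ae_eq (hae.mono fun x hx => ?_)
  have hwx : w x = 1 / 2 := by
    have := hg x
    rw [show g x = 0 from hx, eq_comm, div_eq_zero_iff] at this
    simpa [sub_eq_zero, hw1 x] using this
  have hx : x₀⁻¹ * x = 1 := Circle.ext (by rw [Circle.coe_one]; linear_combination 2 * hwx)
  exact (inv_mul_eq_one.1 hx).symm

theorem eq_dirac_of_Km_eq_mul {μ : Measure Circle} [IsProbabilityMeasure μ] {x₀ : Circle}
    (h : ∀ z ∈ ball (0 : ℂ) 1, Km μ z = x₀ * z) : μ = Measure.dirac x₀ := by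
  refine eq_dirac_of_psiM_eq_one ?_
  have hK := h ((x₀⁻¹ : Circle) / 2) (by norm_num [Circle.norm_coe])
  rw [← mul_div_assoc, ← Circle.coe_mul, mul_inv_cancel, Circle.coe_one, Km] at hK
  have hne : 1 + psiM μ ((x₀⁻¹ : Circle) / 2) ≠ 0 := fun h0 => by
    rw [h0, div_zero] at hK
    norm_num at hK
  rw [div_eq_iff hne] at hK
  linear_combination 2 * hK

structure IsGeneratedFlow (K : ℝ → ℂ → ℂ) (u : ℂ → ℂ) : Prop where
  mapsTo : ∀ t ≥ (0 : ℝ), MapsTo (K t) (ball (0 : ℂ) 1) (ball (0 : ℂ) 1)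
  zero_apply : ∀ z ∈ ball (0 : ℂ) 1, K 0 z = z
  hasDerivWithinAt : ∀ z ∈ ball (0 : ℂ) 1, ∀ t ≥ (0 : ℝ),
    HasDerivWithinAt (fun s => K s z) (-(K t z) * u (K t z)) (Ici 0) t

namespace IsGeneratedFlow

variable {K : ℝ → ℂ → ℂ} {u : ℂ → ℂ} {z : ℂ} {t : ℝ}

theorem continuousOn_comp (hK : IsGeneratedFlow K u) (hu : ContinuousOn u (ball 0 1))
    (hz : z ∈ ball (0 : ℂ) 1) : ContinuousOn (fun s => u (K s z)) (Ici 0) :=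
  hu.comp (fun s hs => (hK.hasDerivWithinAt z hz s hs).continuousWithinAt)
    fun s hs => hK.mapsTo s hs hz

theorem eq_mul_exp (hK : IsGeneratedFlow K u) (hu : ContinuousOn u (ball 0 1))
    (hz : z ∈ ball (0 : ℂ) 1) (ht : 0 ≤ t) :
    K t z = z * Complex.exp (-∫ s in (0 : ℝ)..t, u (K s z)) := by
  rw [eq_mul_exp_neg_integral_of_hasDerivWithinAt (hK.continuousOn_comp hu hz)
    (hK.hasDerivWithinAt z hz) ht, hK.zero_apply z hz]

theorem apply_zero (hK : IsGeneratedFlow K u) (hu : ContinuousOn u (ball 0 1)) (ht : 0 ≤ t) :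
    K t 0 = 0 := by
  rw [hK.eq_mul_exp hu (mem_ball_self one_pos) ht, zero_mul]

theorem apply_ne_zero (hK : IsGeneratedFlow K u) (hu : ContinuousOn u (ball 0 1))
    (hz : z ∈ ball (0 : ℂ) 1) (hz0 : z ≠ 0) (ht : 0 ≤ t) : K t z ≠ 0 := by
  rw [hK.eq_mul_exp hu hz ht]
  exact mul_ne_zero hz0 (Complex.exp_ne_zero _)

theorem norm_le_mul_exp (hK : IsGeneratedFlow K u) (hu : ContinuousOn u (ball 0 1))
    (hz : z ∈ ball (0 : ℂ) 1) (ht : 0 ≤ t) {δ : ℝ}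
    (hδ : ∀ s ∈ Icc 0 t, δ ≤ (u (K s z)).re) :
    ‖K t z‖ ≤ ‖z‖ * Real.exp (-(δ * t)) := by
  have hcont : ContinuousOn (fun s => u (K s z)) (uIcc 0 t) :=
    (hK.continuousOn_comp hu hz).mono (by rw [uIcc_of_le ht]; exact Icc_subset_Ici_self)
  have hre : (∫ s in (0 : ℝ)..t, u (K s z)).re = ∫ s in (0 : ℝ)..t, (u (K s z)).re := by
    simpa using (Complex.reCLM.intervalIntegral_comp_comm hcont.intervalIntegrable).symm
  have hlower : δ * t ≤ ∫ s in (0 : ℝ)..t, (u (K s z)).re := by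
    calc δ * t = ∫ _ in (0 : ℝ)..t, δ := by simp [mul_comm]
      _ ≤ _ := intervalIntegral.integral_mono_on ht intervalIntegrable_const
        (Complex.continuous_re.comp_continuousOn hcont).intervalIntegrable hδ
  rw [hK.eq_mul_exp hu hz ht, norm_mul, Complex.norm_exp, Complex.neg_re, hre]
  gcongr

theorem norm_le (hK : IsGeneratedFlow K u) (hu : ContinuousOn u (ball 0 1))
    (hre : ∀ w ∈ ball (0 : ℂ) 1, 0 ≤ (u w).re) (hz : z ∈ ball (0 : ℂ) 1)
    (ht : 0 ≤ t) : ‖K t z‖ ≤ ‖z‖ := by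
  simpa using hK.norm_le_mul_exp hu hz ht fun s hs => hre _ (hK.mapsTo s hs.1 hz)

theorem eq_exp_mul_of_eqOn_const (hK : IsGeneratedFlow K u) {c : ℂ}
    (hc : EqOn u (fun _ => c) (ball 0 1)) (hz : z ∈ ball (0 : ℂ) 1) (ht : 0 ≤ t) :
    K t z = Complex.exp (-(t * c)) * z := by
  have hint : ∫ s in (0 : ℝ)..t, u (K s z) = ∫ _ in (0 : ℝ)..t, c :=
    intervalIntegral.integral_congr fun s hs =>
      hc (hK.mapsTo s (by rw [uIcc_of_le ht] at hs; exact hs.1) hz)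
  rw [hK.eq_mul_exp (continuousOn_const.congr hc) hz ht, hint, intervalIntegral.integral_const,
    sub_zero, Complex.real_smul, mul_comm]

theorem tendstoUniformlyOn_zero (hK : IsGeneratedFlow K u) (hu : ContinuousOn u (ball 0 1))
    (hre : ∀ w ∈ ball (0 : ℂ) 1, 0 < (u w).re) {S : Set ℂ} (hS : IsCompact S)
    (hSb : S ⊆ ball 0 1) : TendstoUniformlyOn K (fun _ => 0) atTop S := by
  obtain ⟨r, hr1, hSr⟩ := exists_lt_subset_ball hS.isClosed hSb
  have hrb : closedBall (0 : ℂ) r ⊆ ball 0 1 := closedBall_subset_ball hr1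
  obtain ⟨δ, hδpos, hδ⟩ := (isCompact_closedBall (0 : ℂ) r).exists_forall_le'
    (Complex.continuous_re.comp_continuousOn (hu.mono hrb)) fun w hw => hre w (hrb hw)
  have hbound : ∀ τ ≥ (0 : ℝ), ∀ z ∈ S, ‖K τ z‖ ≤ r * Real.exp (-(δ * τ)) := by
    intro τ hτ z hz
    have hzr : ‖z‖ ≤ r := (mem_ball_zero_iff.1 (hSr hz)).le
    have hz1 := hSb hz
    refine (hK.norm_le_mul_exp hu hz1 hτ fun s hs => hδ _ ?_).trans (by gcongr)
    simpa using (hK.norm_le hu (fun w hw => (hre w hw).le) hz1 hs.1).trans hzr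
  rw [← tendsto_prod_principal_iff]
  have hdecay : Tendsto (fun τ => r * Real.exp (-(δ * τ))) atTop (𝓝 0) := by
    simpa using (Real.tendsto_exp_atBot.comp
      (tendsto_neg_atTop_atBot.comp (tendsto_id.const_mul_atTop hδpos))).const_mul r
  refine squeeze_zero_norm' ?_ (hdecay.comp tendsto_fst)
  filter_upwards [prod_mem_prod (Ici_mem_atTop 0) (mem_principal_self S)] with q hq
  exact hbound q.1 hq.1 q.2 hq.2

theorem deriv_zero (hK : IsGeneratedFlow K u) (hu : ContinuousOn u (ball 0 1))
    (hre : ∀ w ∈ ball (0 : ℂ) 1, 0 ≤ (u w).re) (hdiff : DifferentiableAt ℂ (K t) 0)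
    (ht : 0 ≤ t) : deriv (K t) 0 = Complex.exp (-(t * u 0)) := by
  have h0 : (0 : ℂ) ∈ ball (0 : ℂ) 1 := mem_ball_self one_pos
  have hball : ∀ᶠ z in 𝓝 (0 : ℂ), z ∈ ball (0 : ℂ) 1 := isOpen_ball.mem_nhds h0
  have hunif : TendstoUniformlyOn (fun z s => u (K s z)) (fun _ => u 0) (𝓝 0) (uIcc 0 t) := by
    rw [← tendsto_prod_principal_iff]
    refine ((hu.continuousAt (isOpen_ball.mem_nhds h0)).tendsto.comp ?_)
    refine squeeze_zero_norm' ?_ (tendsto_norm_zero.comp tendsto_fst)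
    filter_upwards [prod_mem_prod hball (mem_principal_self (uIcc 0 t))] with q hq
    rw [uIcc_of_le ht] at hq
    exact hK.norm_le hu hre hq.1 hq.2.1
  have hint : Tendsto (fun z => ∫ s in (0 : ℝ)..t, u (K s z)) (𝓝 0) (𝓝 (t * u 0)) := by
    have := hunif.tendsto_intervalIntegral_of_continuousOn (μ := MeasureTheory.volume)
      (hball.mono fun z hz => (hK.continuousOn_comp hu hz).mono
        (by rw [uIcc_of_le ht]; exact Icc_subset_Ici_self))
    simpa [Complex.real_smul] using this
  have hslope : ∀ᶠ z in 𝓝[≠] (0 : ℂ),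
      Complex.exp (-∫ s in (0 : ℝ)..t, u (K s z)) = slope (K t) 0 z := by
    filter_upwards [nhdsWithin_le_nhds hball, self_mem_nhdsWithin] with z hz hz0
    rw [slope_def_field, hK.eq_mul_exp hu hz ht, hK.apply_zero hu ht, sub_zero, sub_zero,
      mul_div_cancel_left₀ _ hz0]
  refine tendsto_nhds_unique (hasDerivAt_iff_tendsto_slope.1 hdiff.hasDerivAt) ?_
  exact ((Complex.continuous_exp.comp continuous_neg).continuousAt.tendsto.comp
    (hint.mono_left nhdsWithin_le_nhds)).congr' hslope

theorem neg_div_deriv_eq (hK : IsGeneratedFlow K u) (hu : ContinuousOn u (ball 0 1))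
    (hu0 : ∀ w ∈ ball (0 : ℂ) 1, u w ≠ 0)
    (hdiff : DifferentiableOn ℂ (K t) (ball 0 1))
    (hsg : ∀ s ≥ (0 : ℝ), K (t + s) z = K t (K s z)) (hz : z ∈ ball (0 : ℂ) 1)
    (ht : 0 ≤ t) : -K t z / deriv (K t) z = -(z * u z) / u (K t z) := by
  rcases eq_or_ne z 0 with rfl | hz0
  · simp [hK.apply_zero hu ht]
  have hident := mul_generator_eq_deriv_mul ht
    (hdiff.differentiableAt (isOpen_ball.mem_nhds hz)) (hK.zero_apply z hz) hsg
    (hK.hasDerivWithinAt z hz)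
  have hderiv : deriv (K t) z = K t z * u (K t z) / (z * u z) := by
    rw [hident, mul_div_cancel_right₀ _ (mul_ne_zero hz0 (hu0 z hz))]
  rw [hderiv]
  field_simp [hK.apply_ne_zero hu hz hz0 ht, hu0 _ (hK.mapsTo t ht hz)]

theorem tendstoLocallyUniformlyOn_neg_div_deriv (hK : IsGeneratedFlow K u)
    (hu : ContinuousOn u (ball 0 1)) (hre : ∀ w ∈ ball (0 : ℂ) 1, 0 < (u w).re)
    (hdiff : ∀ t ≥ (0 : ℝ), DifferentiableOn ℂ (K t) (ball 0 1))
    (hsg : ∀ s ≥ (0 : ℝ), ∀ t ≥ (0 : ℝ), ∀ z ∈ ball (0 : ℂ) 1,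
      K (s + t) z = K s (K t z)) {τ : ℝ} (hτ : 0 < τ) :
    TendstoLocallyUniformlyOn (fun (n : ℕ) z => -K (n * τ) z / deriv (K (n * τ)) z)
      (fun z => -z * u z / u 0) atTop (ball 0 1) := by
  have hu0 : ∀ w ∈ ball (0 : ℂ) 1, u w ≠ 0 := fun w hw h => by simpa [h] using hre w hw
  rw [tendstoLocallyUniformlyOn_iff_forall_isCompact isOpen_ball]
  intro S hSb hS
  have hflow := hK.tendstoUniformlyOn_zero hu hre hS hSb
  rw [← tendsto_prod_principal_iff] at hflow
  have hinv : TendstoUniformlyOn (fun (n : ℕ) z => (u (K (n * τ) z))⁻¹) (fun _ => (u 0)⁻¹)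
      atTop S := by
    rw [← tendsto_prod_principal_iff]
    have hflow' : Tendsto (fun q : ℕ × ℂ => K (q.1 * τ) q.2) (atTop ×ˢ 𝓟 S) (𝓝 0) :=
      hflow.comp ((tendsto_natCast_atTop_atTop.atTop_mul_const hτ).prodMap tendsto_id)
    exact ((hu.continuousAt (isOpen_ball.mem_nhds (mem_ball_self one_pos))).tendsto.inv₀
      (hu0 0 (mem_ball_self one_pos))).comp hflow'
  obtain ⟨M, hM⟩ := hS.exists_bound_of_continuousOn (f := fun z => -(z * u z))
    (continuousOn_id.mul (hu.mono hSb)).neg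
  refine ((hinv.mul_left_of_norm_le hM).congr (Eventually.of_forall fun n z hz => ?_)
    ).congr_right fun z _ => ?_
  · have hnτ : 0 ≤ (n : ℝ) * τ := by positivity
    rw [hK.neg_div_deriv_eq hu hu0 (hdiff _ hnτ) (fun s hs => hsg _ hnτ s hs z (hSb hz))
      (hSb hz) hnτ, div_eq_mul_inv]
  · simp only
    ring

theorem deriv_ne_zero (hK : IsGeneratedFlow K u) (hu : ContinuousOn u (ball 0 1))
    (hre : ∀ w ∈ ball (0 : ℂ) 1, 0 < (u w).re) (hdiff : DifferentiableOn ℂ (K t) (ball 0 1))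
    (hsg : ∀ s ≥ (0 : ℝ), K (t + s) z = K t (K s z)) (hz : z ∈ ball (0 : ℂ) 1)
    (ht : 0 ≤ t) : deriv (K t) z ≠ 0 := by
  rcases eq_or_ne z 0 with rfl | hz0
  · rw [hK.deriv_zero hu (fun w hw => (hre w hw).le)
      (hdiff.differentiableAt (isOpen_ball.mem_nhds hz)) ht]
    exact Complex.exp_ne_zero _
  intro h
  have hident := mul_generator_eq_deriv_mul ht
    (hdiff.differentiableAt (isOpen_ball.mem_nhds hz)) (hK.zero_apply z hz) hsg
    (hK.hasDerivWithinAt z hz)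
  rw [h, zero_mul] at hident
  have huK := hre _ (hK.mapsTo t ht hz)
  exact mul_ne_zero (hK.apply_ne_zero hu hz hz0 ht) (fun h => by simp [h] at huK) hident

end IsGeneratedFlow

theorem embeddable_implies_iterate_limit_general
    (μ : Measure Circle) (hμ : IsProbabilityMeasure μ)
    (hnotpoint : ¬ ∃ x : Circle, μ = Measure.dirac x)
    (K : ℝ → ℂ → ℂ)
    (hdiff : ∀ t ≥ (0 : ℝ), DifferentiableOn ℂ (K t) (ball (0 : ℂ) 1))
    (hmaps : ∀ t ≥ (0 : ℝ), MapsTo (K t) (ball (0 : ℂ) 1) (ball (0 : ℂ) 1))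
    (hid : ∀ z ∈ ball (0 : ℂ) 1, K 0 z = z)
    (hsg : ∀ s ≥ (0 : ℝ), ∀ t ≥ (0 : ℝ), ∀ z ∈ ball (0 : ℂ) 1, K (s + t) z = K s (K t z))
    (u : ℂ → ℂ)
    (hu : DifferentiableOn ℂ u (ball (0 : ℂ) 1))
    (hure : ∀ z ∈ ball (0 : ℂ) 1, 0 ≤ (u z).re)
    (hode : ∀ z ∈ ball (0 : ℂ) 1, ∀ t ≥ (0 : ℝ),
      HasDerivWithinAt (fun s => K s z) (-(K t z) * u (K t z)) (Ici 0) t)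
    (t₀ : ℝ) (ht₀ : 0 ≤ t₀)
    (hembed : ∀ z ∈ ball (0 : ℂ) 1, Km μ z = K t₀ z) :
    u 0 ≠ 0 ∧
    (∀ z ∈ ball (0 : ℂ) 1, deriv (Km μ) z ≠ 0) ∧
    TendstoLocallyUniformlyOn
      (fun (n : ℕ) (z : ℂ) => -((Km μ)^[n] z) / deriv ((Km μ)^[n]) z)
      (fun z => -z * u z / u 0) atTop (ball (0 : ℂ) 1) ∧
    deriv (Km μ) 0 = Complex.exp (-(t₀ : ℂ) * u 0) := by
  have h0 : (0 : ℂ) ∈ ball (0 : ℂ) 1 := mem_ball_self one_pos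
  have hK : IsGeneratedFlow K u := ⟨hmaps, hid, hode⟩
  have hnotrot : ∀ x : Circle, ¬ EqOn (K t₀) (fun z => x * z) (ball 0 1) := fun x hx =>
    hnotpoint ⟨x, eq_dirac_of_Km_eq_mul fun z hz => (hembed z hz).trans (hx hz)⟩
  -- If `re u 0 = 0` then `u` is constant, so `K t₀` is a rotation.
  have hre0 : 0 < (u 0).re := by
    refine (hure 0 h0).lt_of_ne fun h => hnotrot (Circle.exp (-(t₀ * (u 0).im))) fun z hz => ?_
    rw [hK.eq_exp_mul_of_eqOn_const (eqOn_of_re_nonneg_of_re_eq_zero hu isOpen_ball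
      (convex_ball 0 1).isPreconnected hure h0 h.symm) hz ht₀, Circle.coe_exp]
    congr 2
    apply Complex.ext <;> simp [← h]
  have hre := re_pos_of_re_nonneg hu isOpen_ball (convex_ball 0 1).isPreconnected hure h0 hre0
  have ht₀pos : 0 < t₀ :=
    ht₀.lt_of_ne fun h => hnotrot 1 fun z hz => by simp [← h, hid z hz]
  have hiter := iterate_eqOn_of_eqOn ht₀ hmaps hid hsg hembed
  have hderiv : ∀ n : ℕ, EqOn (deriv (Km μ)^[n]) (deriv (K (n * t₀))) (ball 0 1) :=
    fun n z hz => EventuallyEq.deriv_eq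
      (eventually_of_mem (isOpen_ball.mem_nhds hz) (hiter n))
  have hderiv_one : EqOn (deriv (Km μ)) (deriv (K t₀)) (ball 0 1) := by
    simpa using hderiv 1
  refine ⟨fun h => by simp [h] at hre0, fun z hz => ?_, ?_, ?_⟩
  · rw [hderiv_one hz]
    exact hK.deriv_ne_zero hu.continuousOn hre (hdiff t₀ ht₀)
      (fun s hs => hsg t₀ ht₀ s hs z hz) hz ht₀
  · refine (hK.tendstoLocallyUniformlyOn_neg_div_deriv hu.continuousOn hre hdiff hsg
      ht₀pos).congr fun n z hz => ?_
    simp only [hiter n hz, hderiv n hz]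
  · rw [hderiv_one h0, hK.deriv_zero hu.continuousOn hure
      ((hdiff t₀ ht₀).differentiableAt (isOpen_ball.mem_nhds h0)) ht₀, neg_mul]

/-- If a probability measure `μ` on the unit circle that is not concentrated in one
point embeds into a continuous monotone convolution semigroup (i.e. `K_μ = K_{t₀}`
for a continuous composition semigroup of K-transforms `(K_t)` with generator `u`),
then `K_μ' ≠ 0` on `𝔻`, the iterates satisfy
`-K_μ^{∘n}(z)/(K_μ^{∘n})'(z) → -z·u(z)/u(0)` locally uniformly on `𝔻`
(a limit of the form `α z u(z)` with `α = -1/u(0) ≠ 0`), and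
`K_μ'(0) = e^{-t₀ u(0)}`. -/
theorem embeddable_implies_iterate_limit
    (μ : Measure Circle) (hμ : IsProbabilityMeasure μ)
    (hnotpoint : ¬ ∃ x : Circle, μ = Measure.dirac x)
    (K : ℝ → ℂ → ℂ)
    (hdiff : ∀ t ≥ (0 : ℝ), DifferentiableOn ℂ (K t) (ball (0 : ℂ) 1))
    (hmaps : ∀ t ≥ (0 : ℝ), MapsTo (K t) (ball (0 : ℂ) 1) (ball (0 : ℂ) 1))
    (hzero : ∀ t ≥ (0 : ℝ), K t 0 = 0)
    (hid : ∀ z ∈ ball (0 : ℂ) 1, K 0 z = z)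
    (hsg : ∀ s ≥ (0 : ℝ), ∀ t ≥ (0 : ℝ), ∀ z ∈ ball (0 : ℂ) 1, K (s + t) z = K s (K t z))
    (hcont : ∀ t₀ ≥ (0 : ℝ),
      TendstoLocallyUniformlyOn K (K t₀) (nhdsWithin t₀ (Ici 0)) (ball (0 : ℂ) 1))
    (u : ℂ → ℂ)
    (hu : DifferentiableOn ℂ u (ball (0 : ℂ) 1))
    (hure : ∀ z ∈ ball (0 : ℂ) 1, 0 ≤ (u z).re)
    (hode : ∀ z ∈ ball (0 : ℂ) 1, ∀ t ≥ (0 : ℝ),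
      HasDerivWithinAt (fun s => K s z) (-(K t z) * u (K t z)) (Ici 0) t)
    (t₀ : ℝ) (ht₀ : 0 ≤ t₀)
    (hembed : ∀ z ∈ ball (0 : ℂ) 1, Km μ z = K t₀ z) :
    u 0 ≠ 0 ∧
    (∀ z ∈ ball (0 : ℂ) 1, deriv (Km μ) z ≠ 0) ∧
    TendstoLocallyUniformlyOn
      (fun (n : ℕ) (z : ℂ) => -((Km μ)^[n] z) / deriv ((Km μ)^[n]) z)
      (fun z => -z * u z / u 0) atTop (ball (0 : ℂ) 1) ∧
    deriv (Km μ) 0 = Complex.exp (-(t₀ : ℂ) * u 0) :=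
  embeddable_implies_iterate_limit_general μ hμ hnotpoint K hdiff hmaps hid hsg u hu hure hode t₀
    ht₀ hembed
end

section
/- Let a, b ∈ (0,1) be real, and consider the 4×4 complex matrices X = [[1,0,0,0],[0,1,0,0],[0,0,1,a],[0,0,a,1]], Y = [[1,0,b,0],[0,1,0,b],[b,0,1,0],[0,b,0,1]], S_X = [[1,0,0,0],[0,1,0,0],[0,0,p₊,p₋],[0,0,p₋,p₊]] where p₊ = (√(1+a)+√(1−a))/2 and p₋ = (√(1+a)−√(1−a))/2, and S_Y = (1/2)·[[q₊,0,q₋,0],[0,q₊,0,q₋],[q₋,0,q₊,0],[0,q₋,0,q₊]] where q₊ = √(1+b)+√(1−b) and q₋ = √(1+b)−√(1−b), and let ω = (0,0,0,1)ᵀ. Then S_X² = X and S_Y² = Y, and the second moments ⟨ω, (S_X Y S_X)² ω⟩ = 1 + b² + a² and ⟨ω, (S_Y X S_Y)² ω⟩ = 1 + b² + (a²/2)·(1 + √(1−b²)) are different. In particular the distributions of S_X Y S_X and S_Y X S_Y in the vector state given by ω are different. -/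
open Matrix

set_option maxHeartbeats 2000000 in
/-- The example showing that the two possible definitions of a multiplicative
monotone convolution on `ℝ₊` are inequivalent: with the positive matrices `X, Y`
below, their positive square roots `S_X, S_Y`, and the vector `ω = (0,0,0,1)`, one
has `S_X² = X`, `S_Y² = Y`, `⟨ω, (S_X Y S_X)² ω⟩ = 1 + b² + a²`,
`⟨ω, (S_Y X S_Y)² ω⟩ = 1 + b² + (a²/2)(1 + √(1-b²))`, and these second moments are
different. -/
theorem multiplicative_monotone_convolutions_inequivalent
    (a b : ℝ) (ha0 : 0 < a) (ha1 : a < 1) (hb0 : 0 < b) (hb1 : b < 1)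
    (X Y SX SY : Matrix (Fin 4) (Fin 4) ℂ) (ω : Fin 4 → ℂ)
    (hX : X = !![1, 0, 0, 0; 0, 1, 0, 0; 0, 0, 1, (a : ℂ); 0, 0, (a : ℂ), 1])
    (hY : Y = !![1, 0, (b : ℂ), 0; 0, 1, 0, (b : ℂ); (b : ℂ), 0, 1, 0; 0, (b : ℂ), 0, 1])
    (hSX : SX = !![1, 0, 0, 0;
                   0, 1, 0, 0;
                   0, 0, (((Real.sqrt (1 + a) + Real.sqrt (1 - a)) / 2 : ℝ) : ℂ),
                         (((Real.sqrt (1 + a) - Real.sqrt (1 - a)) / 2 : ℝ) : ℂ);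
                   0, 0, (((Real.sqrt (1 + a) - Real.sqrt (1 - a)) / 2 : ℝ) : ℂ),
                         (((Real.sqrt (1 + a) + Real.sqrt (1 - a)) / 2 : ℝ) : ℂ)])
    (hSY : SY = (1 / 2 : ℂ) •
      !![((Real.sqrt (1 + b) + Real.sqrt (1 - b) : ℝ) : ℂ), 0,
         ((Real.sqrt (1 + b) - Real.sqrt (1 - b) : ℝ) : ℂ), 0;
         0, ((Real.sqrt (1 + b) + Real.sqrt (1 - b) : ℝ) : ℂ),
         0, ((Real.sqrt (1 + b) - Real.sqrt (1 - b) : ℝ) : ℂ);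
         ((Real.sqrt (1 + b) - Real.sqrt (1 - b) : ℝ) : ℂ), 0,
         ((Real.sqrt (1 + b) + Real.sqrt (1 - b) : ℝ) : ℂ), 0;
         0, ((Real.sqrt (1 + b) - Real.sqrt (1 - b) : ℝ) : ℂ),
         0, ((Real.sqrt (1 + b) + Real.sqrt (1 - b) : ℝ) : ℂ)])
    (hω : ω = ![0, 0, 0, 1]) :
    SX ^ 2 = X ∧ SY ^ 2 = Y ∧
    star ω ⬝ᵥ ((SX * Y * SX) ^ 2 *ᵥ ω) = 1 + (b : ℂ) ^ 2 + (a : ℂ) ^ 2 ∧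
    star ω ⬝ᵥ ((SY * X * SY) ^ 2 *ᵥ ω)
      = 1 + (b : ℂ) ^ 2 + (a : ℂ) ^ 2 / 2 * (1 + ((Real.sqrt (1 - b ^ 2) : ℝ) : ℂ)) ∧
    star ω ⬝ᵥ ((SX * Y * SX) ^ 2 *ᵥ ω) ≠ star ω ⬝ᵥ ((SY * X * SY) ^ 2 *ᵥ ω) := by
  have hs2 : (Real.sqrt (1 + a) : ℂ) ^ 2 = 1 + (a : ℂ) := by
    rw [← Complex.ofReal_pow, Real.sq_sqrt (by linarith)]; push_cast; ring
  have ht2 : (Real.sqrt (1 - a) : ℂ) ^ 2 = 1 - (a : ℂ) := by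
    rw [← Complex.ofReal_pow, Real.sq_sqrt (by linarith)]; push_cast; ring
  have hu2 : (Real.sqrt (1 + b) : ℂ) ^ 2 = 1 + (b : ℂ) := by
    rw [← Complex.ofReal_pow, Real.sq_sqrt (by linarith)]; push_cast; ring
  have hv2 : (Real.sqrt (1 - b) : ℂ) ^ 2 = 1 - (b : ℂ) := by
    rw [← Complex.ofReal_pow, Real.sq_sqrt (by linarith)]; push_cast; ring
  have huv : (Real.sqrt (1 + b) : ℂ) * (Real.sqrt (1 - b) : ℂ)
      = ((Real.sqrt (1 - b ^ 2) : ℝ) : ℂ) := by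
    rw [← Complex.ofReal_mul, ← Real.sqrt_mul (by linarith)]
    norm_num; ring_nf
  have hwlt : Real.sqrt (1 - b ^ 2) < 1 := by
    have : Real.sqrt (1 - b ^ 2) < Real.sqrt 1 :=
      Real.sqrt_lt_sqrt (by nlinarith) (by nlinarith)
    simpa using this
  subst hX hY hSX hSY hω
  have h3 : star ![(0:ℂ), 0, 0, 1] ⬝ᵥ
      ((!![1, 0, 0, 0;
           0, 1, 0, 0;
           0, 0, (((Real.sqrt (1 + a) + Real.sqrt (1 - a)) / 2 : ℝ) : ℂ),
                 (((Real.sqrt (1 + a) - Real.sqrt (1 - a)) / 2 : ℝ) : ℂ);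
           0, 0, (((Real.sqrt (1 + a) - Real.sqrt (1 - a)) / 2 : ℝ) : ℂ),
                 (((Real.sqrt (1 + a) + Real.sqrt (1 - a)) / 2 : ℝ) : ℂ)] *
        !![1, 0, (b : ℂ), 0; 0, 1, 0, (b : ℂ); (b : ℂ), 0, 1, 0; 0, (b : ℂ), 0, 1] *
        !![1, 0, 0, 0;
           0, 1, 0, 0;
           0, 0, (((Real.sqrt (1 + a) + Real.sqrt (1 - a)) / 2 : ℝ) : ℂ),
                 (((Real.sqrt (1 + a) - Real.sqrt (1 - a)) / 2 : ℝ) : ℂ);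
           0, 0, (((Real.sqrt (1 + a) - Real.sqrt (1 - a)) / 2 : ℝ) : ℂ),
                 (((Real.sqrt (1 + a) + Real.sqrt (1 - a)) / 2 : ℝ) : ℂ)]) ^ 2 *ᵥ
        ![(0:ℂ), 0, 0, 1]) = 1 + (b : ℂ) ^ 2 + (a : ℂ) ^ 2 := by
    simp [pow_two, Matrix.mul_apply, Matrix.mulVec, dotProduct, Fin.sum_univ_four,
      Matrix.vecHead, Matrix.vecTail]
    push_cast
    linear_combination ((b:ℂ)^2/2 + ((Real.sqrt (1+a) : ℂ)^2 + 1 + (a:ℂ))/2) * hs2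
      + ((b:ℂ)^2/2 + ((Real.sqrt (1-a) : ℂ)^2 + 1 - (a:ℂ))/2) * ht2
  have h4 : star ![(0:ℂ), 0, 0, 1] ⬝ᵥ
      (((1 / 2 : ℂ) •
        !![((Real.sqrt (1 + b) + Real.sqrt (1 - b) : ℝ) : ℂ), 0,
           ((Real.sqrt (1 + b) - Real.sqrt (1 - b) : ℝ) : ℂ), 0;
           0, ((Real.sqrt (1 + b) + Real.sqrt (1 - b) : ℝ) : ℂ),
           0, ((Real.sqrt (1 + b) - Real.sqrt (1 - b) : ℝ) : ℂ);
           ((Real.sqrt (1 + b) - Real.sqrt (1 - b) : ℝ) : ℂ), 0,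
           ((Real.sqrt (1 + b) + Real.sqrt (1 - b) : ℝ) : ℂ), 0;
           0, ((Real.sqrt (1 + b) - Real.sqrt (1 - b) : ℝ) : ℂ),
           0, ((Real.sqrt (1 + b) + Real.sqrt (1 - b) : ℝ) : ℂ)] *
        !![1, 0, 0, 0; 0, 1, 0, 0; 0, 0, 1, (a : ℂ); 0, 0, (a : ℂ), 1] *
        ((1 / 2 : ℂ) •
        !![((Real.sqrt (1 + b) + Real.sqrt (1 - b) : ℝ) : ℂ), 0,
           ((Real.sqrt (1 + b) - Real.sqrt (1 - b) : ℝ) : ℂ), 0;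
           0, ((Real.sqrt (1 + b) + Real.sqrt (1 - b) : ℝ) : ℂ),
           0, ((Real.sqrt (1 + b) - Real.sqrt (1 - b) : ℝ) : ℂ);
           ((Real.sqrt (1 + b) - Real.sqrt (1 - b) : ℝ) : ℂ), 0,
           ((Real.sqrt (1 + b) + Real.sqrt (1 - b) : ℝ) : ℂ), 0;
           0, ((Real.sqrt (1 + b) - Real.sqrt (1 - b) : ℝ) : ℂ),
           0, ((Real.sqrt (1 + b) + Real.sqrt (1 - b) : ℝ) : ℂ)])) ^ 2 *ᵥ
        ![(0:ℂ), 0, 0, 1])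
      = 1 + (b : ℂ) ^ 2 + (a : ℂ) ^ 2 / 2 * (1 + ((Real.sqrt (1 - b ^ 2) : ℝ) : ℂ)) := by
    simp [pow_two, Matrix.mul_apply, Matrix.mulVec, dotProduct, Fin.sum_univ_four,
      Matrix.smul_apply, Matrix.vecHead, Matrix.vecTail]
    push_cast
    have hbb : (1 : ℝ) - b * b = 1 - b ^ 2 := by ring
    simp only [hbb]
    linear_combination
      ((a:ℂ)^2/4 * ((Real.sqrt (1+b) : ℂ) * (Real.sqrt (1-b) : ℂ))
        + (a:ℂ)^2/4 * (Real.sqrt (1-b) : ℂ)^2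
        + (1/2 + (a:ℂ)^2/8) * ((Real.sqrt (1+b) : ℂ)^2 + 1 + (b:ℂ))) * hu2
      + ((a:ℂ)^2/4 * ((Real.sqrt (1+b) : ℂ) * (Real.sqrt (1-b) : ℂ))
        + (a:ℂ)^2/4 * (1 + (b:ℂ))
        + (1/2 + (a:ℂ)^2/8) * ((Real.sqrt (1-b) : ℂ)^2 + 1 - (b:ℂ))) * hv2
      + ((a:ℂ)^2/2) * huv
  refine ⟨?_, ?_, h3, h4, ?_⟩
  · ext i j
    fin_cases i <;> fin_cases j
    all_goals simp [pow_two, Matrix.mul_apply, Fin.sum_univ_four, Matrix.vecHead,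
      Matrix.vecTail]
    all_goals try push_cast
    all_goals try ring
    all_goals try linear_combination (hs2 + ht2) / 2
    all_goals linear_combination (hs2 - ht2) / 2
  · ext i j
    fin_cases i <;> fin_cases j
    all_goals simp [pow_two, Matrix.mul_apply, Fin.sum_univ_four, Matrix.smul_apply,
        Matrix.vecHead, Matrix.vecTail]
    all_goals try push_cast
    all_goals try ring
    all_goals try linear_combination (hu2 + hv2) / 2
    all_goals linear_combination (hu2 - hv2) / 2
  · rw [h3, h4]
    intro h
    have h' : ((1 + b ^ 2 + a ^ 2 : ℝ) : ℂ)
        = ((1 + b ^ 2 + a ^ 2 / 2 * (1 + Real.sqrt (1 - b ^ 2)) : ℝ) : ℂ) := by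
      push_cast
      linear_combination h
    have hr := Complex.ofReal_inj.mp h'
    have ha2 : (0:ℝ) < a ^ 2 := by positivity
    nlinarith [hwlt, ha2]
end
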